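/- arXiv:2505.22665 — 10 statements merged into one kernel-verified Lean document; each statement's English description precedes it below -/
import Mathlib

section
/- Suppose that for every initial value C ∈ ℝ^n there exists a twice continuously differentiable solution y : V → ℝ^n on some neighborhood V of 0 of the linear system ∂y_r/∂x_u + Σ_{s=1}^n f_{rsu} y_s = 0 (for all 1 ≤ r ≤ n, 1 ≤ u ≤ k) with y(0) = C. Then the curvature functions vanish identically near 0: R_{tsuv}(x) = 0 for all 1 ≤ t,s ≤ n, 1 ≤ u,v ≤ k and all x in a neighborhood of 0. -/
/-!
Differentiating the system once more expresses the second derivatives of a `C²` solution `y`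
through `f`, `∂f` and `y` itself; the symmetry of second derivatives then yields the
integrability condition `∑_s R_{tsuv} y_s = 0` at every point where `y` solves the system.
The solutions with initial values the standard basis vectors are the columns of a matrix that
is the identity at `0`, hence invertible near `0`, so there `R` vanishes.
-/

open Filter Topology

theorem eventually_det_ne_zero_of_eq_single {ι X : Type*} [Fintype ι] [DecidableEq ι]
    [TopologicalSpace X] {y : ι → X → ι → ℝ} {x₀ : X}
    (hy : ∀ i, ContinuousAt (y i) x₀) (hy₀ : ∀ i, y i x₀ = Pi.single i 1) :
    ∀ᶠ x in 𝓝 x₀, (Matrix.of fun s i => y i x s).det ≠ 0 := by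
  have hY : ContinuousAt (fun x => Matrix.of fun s i => y i x s) x₀ :=
    continuousAt_pi.2 fun s => continuousAt_pi.2 fun i =>
      (continuous_apply s).continuousAt.comp (hy i)
  have hY₀ : (Matrix.of fun s i => y i x₀ s) = 1 := by
    ext s i
    simp [hy₀, Matrix.one_apply, Pi.single_apply]
  exact (continuous_id.matrix_det.continuousAt.comp hY).eventually_ne (by simp [hY₀])

section

variable {ι κ E : Type*} [Fintype ι] [NormedAddCommGroup E] [NormedSpace ℝ E]

/-- `R_{tsuv}(x)`, where `e u` is the direction of the partial derivative `∂/∂x_u`. -/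
noncomputable def curvature (f : ι → ι → κ → E → ℝ) (e : κ → E) (x : E) (t s : ι) (u v : κ) :
    ℝ :=
  fderiv ℝ (f t s v) x (e u) - fderiv ℝ (f t s u) x (e v)
    + ∑ p, f t p u x * f p s v x - ∑ p, f t p v x * f p s u x

theorem fderiv_fderiv_apply_of_eventuallyEq {F : Type*} [NormedAddCommGroup F] [NormedSpace ℝ F]
    {g φ : E → F} {x a : E} (hg : DifferentiableAt ℝ (fderiv ℝ g) x)
    (hφ : (fun z => fderiv ℝ g z a) =ᶠ[𝓝 x] φ) (b : E) :
    fderiv ℝ (fderiv ℝ g) x b a = fderiv ℝ φ x b := by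
  rw [← hφ.fderiv_eq, fderiv_clm_apply hg (differentiableAt_const a)]
  simp

variable {f : ι → ι → κ → E → ℝ} {e : κ → E} {y : E → ι → ℝ} {x : E}

theorem fderiv_fderiv_solution_apply
    (hf : ∀ r s u, DifferentiableAt ℝ (f r s u) x) (hy : ContDiffAt ℝ 2 y x)
    (heq : ∀ᶠ z in 𝓝 x, ∀ r u, fderiv ℝ (fun w => y w r) z (e u) + ∑ s, f r s u z * y z s = 0)
    (t : ι) (a b : κ) :
    fderiv ℝ (fderiv ℝ (fun w => y w t)) x (e b) (e a)
      = -∑ s, (fderiv ℝ (f t s a) x (e b) - ∑ p, f t p a x * f p s b x) * y x s := by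
  have hyC2 : ∀ r, ContDiffAt ℝ 2 (fun w => y w r) x := contDiffAt_pi.1 hy
  have hyD : ∀ r, DifferentiableAt ℝ (fun w => y w r) x :=
    fun r => (hyC2 r).differentiableAt two_ne_zero
  have hsolved : (fun z => fderiv ℝ (fun w => y w t) z (e a)) =ᶠ[𝓝 x]
      fun z => -∑ s, f t s a z * y z s := by
    filter_upwards [heq] with z hz using eq_neg_of_add_eq_zero_left (hz t a)
  have hyx : ∀ s, fderiv ℝ (fun w => y w s) x (e b) = -∑ p, f s p b x * y x p :=
    fun s => eq_neg_of_add_eq_zero_left (heq.self_of_nhds s b)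
  rw [fderiv_fderiv_apply_of_eventuallyEq
    (((hyC2 t).fderiv_right (m := 1) le_rfl).differentiableAt one_ne_zero) hsolved,
    fderiv_fun_neg, fderiv_fun_sum (A := fun s z => f t s a z * y z s)
      fun s _ => (hf t s a).mul (hyD s)]
  simp only [fderiv_fun_mul (hf t _ a) (hyD _), neg_apply, sum_apply,
    add_apply, smul_apply, smul_eq_mul, hyx]
  simp only [mul_neg, Finset.mul_sum, sub_mul, Finset.sum_mul, Finset.sum_sub_distrib,
    Finset.sum_add_distrib, Finset.sum_neg_distrib]
  rw [Finset.sum_comm (f := fun s p => f t s a x * (f s p b x * y x p))]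
  simp only [mul_assoc, mul_comm (y x _)]
  ring

theorem sum_curvature_mul_solution_eq_zero
    (hf : ∀ r s u, DifferentiableAt ℝ (f r s u) x) (hy : ContDiffAt ℝ 2 y x)
    (heq : ∀ᶠ z in 𝓝 x, ∀ r u, fderiv ℝ (fun w => y w r) z (e u) + ∑ s, f r s u z * y z s = 0)
    (t : ι) (u v : κ) :
    ∑ s, curvature f e x t s u v * y x s = 0 := by
  have hsymm := (contDiffAt_pi.1 hy t).isSymmSndFDerivAt (by simp) (e u) (e v)
  rw [fderiv_fderiv_solution_apply hf hy heq t v u,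
    fderiv_fderiv_solution_apply hf hy heq t u v, neg_inj, ← sub_eq_zero,
    ← Finset.sum_sub_distrib] at hsymm
  rw [← hsymm]
  refine Finset.sum_congr rfl fun s _ => ?_
  rw [curvature]
  ring

theorem curvature_eq_zero_of_det_ne_zero [DecidableEq ι] {y : ι → E → ι → ℝ}
    (hf : ∀ r s u, DifferentiableAt ℝ (f r s u) x) (hy : ∀ i, ContDiffAt ℝ 2 (y i) x)
    (heq : ∀ i, ∀ᶠ z in 𝓝 x, ∀ r u,
      fderiv ℝ (fun w => y i w r) z (e u) + ∑ s, f r s u z * y i z s = 0)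
    (hdet : (Matrix.of fun s i => y i x s).det ≠ 0) (t s : ι) (u v : κ) :
    curvature f e x t s u v = 0 := by
  have hvecMul : Matrix.vecMul (fun s => curvature f e x t s u v) (Matrix.of fun s i => y i x s)
      = 0 := funext fun i => sum_curvature_mul_solution_eq_zero hf (hy i) (heq i) t u v
  exact congrFun (Matrix.eq_zero_of_vecMul_eq_zero hdet hvecMul) s

end

theorem stmt_0_general (n k : ℕ)
    (U : Set (Fin k → ℝ))
    (f : Fin n → Fin n → Fin k → (Fin k → ℝ) → ℝ)
    (hf : ∀ r s u, AnalyticOnNhd ℝ (f r s u) U)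
    (hsol : ∀ C : Fin n → ℝ, ∃ V : Set (Fin k → ℝ), IsOpen V ∧ (0 : Fin k → ℝ) ∈ V ∧ V ⊆ U ∧
      ∃ y : (Fin k → ℝ) → Fin n → ℝ, ContDiffOn ℝ 2 y V ∧ y 0 = C ∧
        ∀ x ∈ V, ∀ (r : Fin n) (u : Fin k),
          fderiv ℝ (fun z => y z r) x (Pi.single u 1) + ∑ s, f r s u x * y x s = 0) :
    ∃ V : Set (Fin k → ℝ), IsOpen V ∧ (0 : Fin k → ℝ) ∈ V ∧
      ∀ x ∈ V, ∀ (t s : Fin n) (u v : Fin k),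
        fderiv ℝ (f t s v) x (Pi.single u 1) - fderiv ℝ (f t s u) x (Pi.single v 1)
          + ∑ p, f t p u x * f p s v x - ∑ p, f t p v x * f p s u x = 0 := by
  choose V hVopen hV0 hVU y hy hy0 hyeq using fun i : Fin n => hsol (Pi.single i 1)
  have hdet := eventually_det_ne_zero_of_eq_single
    (fun i => (hy i).continuousOn.continuousAt ((hVopen i).mem_nhds (hV0 i))) hy0
  obtain ⟨W, hW, hWopen, hW0⟩ := eventually_nhds_iff.1
    ((eventually_all.2 fun i => (hVopen i).mem_nhds (hV0 i)).and hdet)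
  refine ⟨W, hWopen, hW0, fun x hx t s u v => ?_⟩
  obtain ⟨hxV, hxdet⟩ := hW x hx
  have hVx : ∀ i, V i ∈ 𝓝 x := fun i => (hVopen i).mem_nhds (hxV i)
  exact curvature_eq_zero_of_det_ne_zero
    (fun r s u => (hf r s u x (hVU t (hxV t))).differentiableAt)
    (fun i => (hy i).contDiffAt (hVx i)) (fun i => eventually_of_mem (hVx i) (hyeq i))
    hxdet t s u v

/-- If for every initial value `C ∈ ℝⁿ` the linear system
`∂y_r/∂x_u + ∑_s f_{rsu} y_s = 0` has a twice continuously differentiable solution on some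
neighborhood of `0` with `y 0 = C`, then the curvature functions
`R_{tsuv} = ∂f_{tsv}/∂x_u − ∂f_{tsu}/∂x_v + ∑_p f_{tpu} f_{psv} − ∑_p f_{tpv} f_{psu}`
vanish identically on a neighborhood of `0`. -/
theorem stmt_0 (n k : ℕ) (hn : 1 ≤ n) (hk : 1 ≤ k)
    (U : Set (Fin k → ℝ)) (hUopen : IsOpen U) (hU0 : (0 : Fin k → ℝ) ∈ U)
    (f : Fin n → Fin n → Fin k → (Fin k → ℝ) → ℝ)
    (hf : ∀ r s u, AnalyticOnNhd ℝ (f r s u) U)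
    (hsol : ∀ C : Fin n → ℝ, ∃ V : Set (Fin k → ℝ), IsOpen V ∧ (0 : Fin k → ℝ) ∈ V ∧ V ⊆ U ∧
      ∃ y : (Fin k → ℝ) → Fin n → ℝ, ContDiffOn ℝ 2 y V ∧ y 0 = C ∧
        ∀ x ∈ V, ∀ (r : Fin n) (u : Fin k),
          fderiv ℝ (fun z => y z r) x (Pi.single u 1) + ∑ s, f r s u x * y x s = 0) :
    ∃ V : Set (Fin k → ℝ), IsOpen V ∧ (0 : Fin k → ℝ) ∈ V ∧
      ∀ x ∈ V, ∀ (t s : Fin n) (u v : Fin k),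
        fderiv ℝ (f t s v) x (Pi.single u 1) - fderiv ℝ (f t s u) x (Pi.single v 1)
          + ∑ p, f t p u x * f p s v x - ∑ p, f t p v x * f p s u x = 0 :=
  stmt_0_general n k U f hf hsol
end

section
/- Let y : V → ℝ^n be a twice continuously differentiable solution on a neighborhood V ⊆ U of 0 of the linear system ∂y_r/∂x_u + Σ_{s=1}^n f_{rsu} y_s = 0 (for all 1 ≤ r ≤ n, 1 ≤ u ≤ k). Then for all 1 ≤ t ≤ n, 1 ≤ u, v ≤ k and all x ∈ V, one has Σ_{s=1}^n R_{tsuv}(x) y_s(x) = 0. -/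
/-!
Differentiating the system `∂_v y_t = -∑_s f_{tsv} y_s` in the direction `u` and replacing the
first derivatives `∂_u y_s` by the system once more gives
`∂_u ∂_v y_t = ∑_s (∑_p f_{tpv} f_{psu} - ∂_u f_{tsv}) y_s`.
Since `y` is `C²`, its mixed partials commute, and the difference of this identity and the one
with `u` and `v` exchanged is `∑_s R_{tsuv} y_s = 0`.
-/

open Filter Topology

section

variable {E F : Type*} [NormedAddCommGroup E] [NormedSpace ℝ E]
  [NormedAddCommGroup F] [NormedSpace ℝ F]

theorem ContDiffAt.fderiv_fderiv_apply_comm {g : E → F} {x : E} (hg : ContDiffAt ℝ 2 g x)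
    (v w : E) :
    fderiv ℝ (fun z => fderiv ℝ g z v) x w = fderiv ℝ (fun z => fderiv ℝ g z w) x v := by
  have hdg : DifferentiableAt ℝ (fderiv ℝ g) x :=
    (hg.fderiv_right (m := 1) le_rfl).differentiableAt one_ne_zero
  rw [fderiv_clm_apply hdg (differentiableAt_const v),
    fderiv_clm_apply hdg (differentiableAt_const w)]
  simpa using hg.isSymmSndFDerivAt (by simp) w v

end

section LinearSystem

variable {E ι κ : Type*} [NormedAddCommGroup E] [NormedSpace ℝ E] [Fintype ι]
  {f : ι → ι → κ → E → ℝ} {y : E → ι → ℝ} {e : κ → E} {x : E}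

theorem fderiv_apply_eq_neg_sum_of_system
    (hsys : ∀ r u, fderiv ℝ (fun z => y z r) x (e u) + ∑ s, f r s u x * y x s = 0)
    (r : ι) (u : κ) :
    fderiv ℝ (fun z => y z r) x (e u) = -∑ s, f r s u x * y x s :=
  eq_neg_of_add_eq_zero_left (hsys r u)

theorem fderiv_fderiv_apply_eq_sum_of_system
    (hsys : ∀ᶠ z in 𝓝 x, ∀ r u, fderiv ℝ (fun z => y z r) z (e u) + ∑ s, f r s u z * y z s = 0)
    (hf : ∀ r s u, DifferentiableAt ℝ (f r s u) x)
    (hy : ∀ s, DifferentiableAt ℝ (fun z => y z s) x)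
    (t : ι) (u v : κ) :
    fderiv ℝ (fun z => fderiv ℝ (fun z => y z t) z (e v)) x (e u)
      = ∑ s, (∑ p, f t p v x * f p s u x - fderiv ℝ (f t s v) x (e u)) * y x s := by
  have hfirst : (fun z => fderiv ℝ (fun z => y z t) z (e v)) =ᶠ[𝓝 x]
      fun z => -∑ s, f t s v z * y z s :=
    hsys.mono fun z hz => fderiv_apply_eq_neg_sum_of_system hz t v
  have hderiv : HasFDerivAt (fun z => -∑ s, f t s v z * y z s)
      (-∑ s, (f t s v x • fderiv ℝ (fun z => y z s) x + y x s • fderiv ℝ (f t s v) x)) x :=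
    (HasFDerivAt.fun_sum fun s _ => (hf t s v).hasFDerivAt.mul (hy s).hasFDerivAt).neg
  have hsysx := fderiv_apply_eq_neg_sum_of_system hsys.self_of_nhds
  rw [hfirst.fderiv_eq, hderiv.fderiv]
  simp only [neg_apply, FunLike.coe_sum, Finset.sum_apply,
    add_apply, smul_apply, smul_eq_mul, hsysx]
  simp only [mul_neg, Finset.mul_sum, Finset.sum_mul, sub_mul, Finset.sum_sub_distrib,
    Finset.sum_add_distrib, Finset.sum_neg_distrib, neg_add_rev, neg_neg, mul_assoc]
  rw [Finset.sum_comm (f := fun s p => f t p v x * (f p s u x * y x s))]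
  simp only [mul_comm (y x _)]
  ring

end LinearSystem

theorem stmt_1_general (n k : ℕ)
    (U : Set (Fin k → ℝ))
    (f : Fin n → Fin n → Fin k → (Fin k → ℝ) → ℝ)
    (hf : ∀ r s u, AnalyticOnNhd ℝ (f r s u) U)
    (V : Set (Fin k → ℝ)) (hVopen : IsOpen V) (hVU : V ⊆ U)
    (y : (Fin k → ℝ) → Fin n → ℝ) (hy : ContDiffOn ℝ 2 y V)
    (hsys : ∀ x ∈ V, ∀ (r : Fin n) (u : Fin k),
      fderiv ℝ (fun z => y z r) x (Pi.single u 1) + ∑ s, f r s u x * y x s = 0) :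
    ∀ x ∈ V, ∀ (t : Fin n) (u v : Fin k),
      ∑ s, (fderiv ℝ (f t s v) x (Pi.single u 1) - fderiv ℝ (f t s u) x (Pi.single v 1)
        + ∑ p, f t p u x * f p s v x - ∑ p, f t p v x * f p s u x) * y x s = 0 := by
  intro x hx t u v
  have hyx : ∀ s, ContDiffAt ℝ 2 (fun z => y z s) x :=
    contDiffAt_pi.mp ((hy x hx).contDiffAt (hVopen.mem_nhds hx))
  have hfx : ∀ r s u, DifferentiableAt ℝ (f r s u) x := fun r s u =>
    (hf r s u x (hVU hx)).differentiableAt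
  have hyd : ∀ s, DifferentiableAt ℝ (fun z => y z s) x := fun s =>
    (hyx s).differentiableAt two_ne_zero
  have hsysx := eventually_of_mem (hVopen.mem_nhds hx) hsys
  have huv := fderiv_fderiv_apply_eq_sum_of_system hsysx hfx hyd t u v
  have hvu := fderiv_fderiv_apply_eq_sum_of_system hsysx hfx hyd t v u
  rw [(hyx t).fderiv_fderiv_apply_comm] at huv
  rw [← sub_eq_zero_of_eq (hvu.symm.trans huv), ← Finset.sum_sub_distrib]
  exact Finset.sum_congr rfl fun s _ => by ring

/-- If `y` is a twice continuously differentiable solution of the linear system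
`∂y_r/∂x_u + ∑_s f_{rsu} y_s = 0` on a neighborhood `V ⊆ U` of `0`, then
`∑_s R_{tsuv}(x) y_s(x) = 0` on `V`, where
`R_{tsuv} = ∂f_{tsv}/∂x_u − ∂f_{tsu}/∂x_v + ∑_p f_{tpu} f_{psv} − ∑_p f_{tpv} f_{psu}`. -/
theorem stmt_1 (n k : ℕ) (hn : 1 ≤ n) (hk : 1 ≤ k)
    (U : Set (Fin k → ℝ)) (hUopen : IsOpen U) (hU0 : (0 : Fin k → ℝ) ∈ U)
    (f : Fin n → Fin n → Fin k → (Fin k → ℝ) → ℝ)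
    (hf : ∀ r s u, AnalyticOnNhd ℝ (f r s u) U)
    (V : Set (Fin k → ℝ)) (hVopen : IsOpen V) (hV0 : (0 : Fin k → ℝ) ∈ V) (hVU : V ⊆ U)
    (y : (Fin k → ℝ) → Fin n → ℝ) (hy : ContDiffOn ℝ 2 y V)
    (hsys : ∀ x ∈ V, ∀ (r : Fin n) (u : Fin k),
      fderiv ℝ (fun z => y z r) x (Pi.single u 1) + ∑ s, f r s u x * y x s = 0) :
    ∀ x ∈ V, ∀ (t : Fin n) (u v : Fin k),
      ∑ s, (fderiv ℝ (f t s v) x (Pi.single u 1) - fderiv ℝ (f t s u) x (Pi.single v 1)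
        + ∑ p, f t p u x * f p s v x - ∑ p, f t p v x * f p s u x) * y x s = 0 :=
  stmt_1_general n k U f hf V hVopen hVU y hy hsys
end

section
/- Assume R_{tsuv} ≡ 0 on U. Then there exists a family of matrix-valued functions P^{<w₁,…,w_k>}_{ts} : U → ℝ (indexed by w₁,…,w_k ∈ ℕ and 1 ≤ t, s ≤ n), analytic on U, such that P^{<0,…,0>}_{ts} = δ_{ts} and, for every 1 ≤ u ≤ k and every multi-index (w₁,…,w_k), P^{<w₁,…,w_u+1,…,w_k>}_{ts} = ∂P^{<w₁,…,w_k>}_{ts}/∂x_u + Σ_{p=1}^n f_{tpu} P^{<w₁,…,w_k>}_{ps} on U. -/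
/-!
Write `∇_u g = ∂_u g + f_u g` for the covariant derivative of a matrix-valued function `g`
along the `u`-th direction. The commutator `[∇_u, ∇_v]` is multiplication by the curvature
matrix `R_{uv}`, so on a flat connection the operators `∇_u` commute on analytic functions.
Hence `P^w = ∇_1^{w_1} ⋯ ∇_k^{w_k} 1` does not depend on the order of the factors, and the
recursion is the case where `∇_u` is applied last.
-/

namespace ConnectionForm

section Connection

variable {ι κ E : Type*} [Fintype ι] [NormedAddCommGroup E] [NormedSpace ℝ E]

noncomputable def covDeriv (e : κ → E) (f : ι → ι → κ → E → ℝ) (u : κ)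
    (g : ι → ι → E → ℝ) : ι → ι → E → ℝ :=
  fun t s x => fderiv ℝ (g t s) x (e u) + ∑ p, f t p u x * g p s x

noncomputable def curvature (e : κ → E) (f : ι → ι → κ → E → ℝ) (t s : ι) (u v : κ)
    (x : E) : ℝ :=
  fderiv ℝ (f t s v) x (e u) - fderiv ℝ (f t s u) x (e v)
    + ∑ p, f t p u x * f p s v x - ∑ p, f t p v x * f p s u x

variable {e : κ → E} {f : ι → ι → κ → E → ℝ} {g : ι → ι → E → ℝ} {x : E}

lemma fderiv_covDeriv_apply (u v : κ) (t s : ι) (hf : ∀ t p, DifferentiableAt ℝ (f t p v) x)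
    (hg : ∀ t s, ContDiffAt ℝ 2 (g t s) x) :
    fderiv ℝ (covDeriv e f v g t s) x (e u)
      = fderiv ℝ (fderiv ℝ (g t s)) x (e u) (e v)
        + ∑ p, (fderiv ℝ (f t p v) x (e u) * g p s x
            + f t p v x * fderiv ℝ (g p s) x (e u)) := by
  have hg₁ : ∀ t s, DifferentiableAt ℝ (g t s) x :=
    fun t s => (hg t s).differentiableAt (by norm_num)
  have hg₂ : DifferentiableAt ℝ (fderiv ℝ (g t s)) x :=
    ((hg t s).fderiv_right (m := 1) (by norm_num)).differentiableAt one_ne_zero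
  have hderiv : HasFDerivAt (covDeriv e f v g t s)
      ((fderiv ℝ (fderiv ℝ (g t s)) x).flip (e v)
        + ∑ p, (g p s x • fderiv ℝ (f t p v) x + f t p v x • fderiv ℝ (g p s) x)) x := by
    refine ((hg₂.hasFDerivAt.clm_apply (hasFDerivAt_const (e v) x)).add
      (HasFDerivAt.fun_sum fun p _ =>
        (hf t p).hasFDerivAt.mul (hg₁ p s).hasFDerivAt)).congr_fderiv ?_
    simp [add_comm]
  rw [hderiv.fderiv]
  simp [mul_comm]

lemma covDeriv_comm_sub (u v : κ) (t s : ι) (hf : ∀ t p w, DifferentiableAt ℝ (f t p w) x)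
    (hg : ∀ t s, ContDiffAt ℝ 2 (g t s) x) :
    covDeriv e f u (covDeriv e f v g) t s x - covDeriv e f v (covDeriv e f u g) t s x
      = ∑ p, curvature e f t p u v x * g p s x := by
  have hsymm : fderiv ℝ (fderiv ℝ (g t s)) x (e u) (e v)
      = fderiv ℝ (fderiv ℝ (g t s)) x (e v) (e u) :=
    (hg t s).isSymmSndFDerivAt (by simp) _ _
  have hassoc : ∀ a b : κ, ∑ p, f t p a x * ∑ r, f p r b x * g r s x
      = ∑ p, (∑ r, f t r a x * f r p b x) * g p s x := by
    intro a b
    simp only [Finset.mul_sum, Finset.sum_mul, mul_assoc]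
    exact Finset.sum_comm
  simp only [covDeriv]
  rw [fderiv_covDeriv_apply u v t s (fun t p => hf t p v) hg,
    fderiv_covDeriv_apply v u t s (fun t p => hf t p u) hg, hsymm]
  simp only [curvature, mul_add, Finset.sum_add_distrib, hassoc]
  simp only [sub_mul, add_mul, Finset.sum_add_distrib, Finset.sum_sub_distrib]
  ring

variable {U : Set E}

lemma covDeriv_congr (hU : IsOpen U) {g₁ g₂ : ι → ι → E → ℝ}
    (h : ∀ t s, Set.EqOn (g₁ t s) (g₂ t s) U) (u : κ) (t s : ι) :
    Set.EqOn (covDeriv e f u g₁ t s) (covDeriv e f u g₂ t s) U := fun x hx => by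
  have hfderiv : ∀ t s, fderiv ℝ (g₁ t s) x = fderiv ℝ (g₂ t s) x := fun t s =>
    (Filter.eventuallyEq_of_mem (hU.mem_nhds hx) (h t s)).fderiv_eq
  simp only [covDeriv, hfderiv, h _ s hx]

lemma analyticOnNhd_covDeriv {u : κ} (hf : ∀ t p, AnalyticOnNhd ℝ (f t p u) U)
    (hg : ∀ t s, AnalyticOnNhd ℝ (g t s) U) (t s : ι) :
    AnalyticOnNhd ℝ (covDeriv e f u g t s) U :=
  ((ContinuousLinearMap.apply ℝ ℝ (e u)).comp_analyticOnNhd (hg t s).fderiv).add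
    (Finset.analyticOnNhd_fun_sum _ fun p _ => (hf t p).mul (hg p s))

variable [DecidableEq ι]

noncomputable def iteratedCovDeriv (e : κ → E) (f : ι → ι → κ → E → ℝ) :
    List κ → ι → ι → E → ℝ
  | [] => fun t s _ => if t = s then 1 else 0
  | u :: l => covDeriv e f u (iteratedCovDeriv e f l)

lemma analyticOnNhd_iteratedCovDeriv (hf : ∀ t p u, AnalyticOnNhd ℝ (f t p u) U) :
    ∀ (l : List κ) (t s : ι), AnalyticOnNhd ℝ (iteratedCovDeriv e f l t s) U
  | [], _, _ => analyticOnNhd_const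
  | u :: l, t, s => analyticOnNhd_covDeriv (fun t p => hf t p u)
      (analyticOnNhd_iteratedCovDeriv hf l) t s

lemma iteratedCovDeriv_eqOn_of_perm (hU : IsOpen U) (hf : ∀ t p u, AnalyticOnNhd ℝ (f t p u) U)
    (hflat : ∀ x ∈ U, ∀ t s u v, curvature e f t s u v x = 0) {l₁ l₂ : List κ}
    (h : l₁.Perm l₂) (t s : ι) :
    Set.EqOn (iteratedCovDeriv e f l₁ t s) (iteratedCovDeriv e f l₂ t s) U := by
  induction h generalizing t s with
  | nil => exact Set.eqOn_refl _ _
  | cons u _ ih => exact covDeriv_congr hU ih u t s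
  | swap u v l =>
    intro x hx
    have hcomm := covDeriv_comm_sub (e := e) v u t s
      (fun t p w => (hf t p w x hx).differentiableAt)
      (fun t s => (analyticOnNhd_iteratedCovDeriv (e := e) hf l t s x hx).contDiffAt)
    exact sub_eq_zero.1 (hcomm.trans (by simp [hflat x hx]))
  | trans _ _ ih₁ ih₂ => exact (ih₁ t s).trans (ih₂ t s)

end Connection

section MultiIndex

variable {κ : Type*} [Fintype κ]

noncomputable def multiIndexList (w : κ → ℕ) : List κ :=
  (Finset.univ : Finset κ).toList.flatMap fun u => List.replicate (w u) u

lemma multiIndexList_zero : multiIndexList (0 : κ → ℕ) = [] := by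
  simp [multiIndexList]

variable [DecidableEq κ]

lemma count_multiIndexList (w : κ → ℕ) (v : κ) : (multiIndexList w).count v = w v := by
  simp [multiIndexList, List.count_flatMap, List.count_replicate, Finset.sum_map_toList]

lemma multiIndexList_add_single_perm (w : κ → ℕ) (u : κ) :
    (multiIndexList (w + Pi.single u 1)).Perm (u :: multiIndexList w) := by
  refine List.perm_iff_count.2 fun v => ?_
  rw [List.count_cons, count_multiIndexList, count_multiIndexList]
  rcases eq_or_ne u v with rfl | h
  · simp
  · simp [h, Ne.symm h]

end MultiIndex

end ConnectionForm

open ConnectionForm in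
theorem stmt_3_general (n k : ℕ)
    (U : Set (Fin k → ℝ)) (hUopen : IsOpen U)
    (f : Fin n → Fin n → Fin k → (Fin k → ℝ) → ℝ)
    (hf : ∀ r s u, AnalyticOnNhd ℝ (f r s u) U)
    (hR : ∀ x ∈ U, ∀ (t s : Fin n) (u v : Fin k),
      fderiv ℝ (f t s v) x (Pi.single u 1) - fderiv ℝ (f t s u) x (Pi.single v 1)
        + ∑ p, f t p u x * f p s v x - ∑ p, f t p v x * f p s u x = 0) :
    ∃ P : (Fin k → ℕ) → Fin n → Fin n → (Fin k → ℝ) → ℝ,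
      (∀ w t s, AnalyticOnNhd ℝ (P w t s) U) ∧
      (∀ t s, ∀ x ∈ U, P 0 t s x = if t = s then (1 : ℝ) else 0) ∧
      (∀ (w : Fin k → ℕ) (u : Fin k) (t s : Fin n), ∀ x ∈ U,
        P (w + Pi.single u 1) t s x
          = fderiv ℝ (P w t s) x (Pi.single u 1) + ∑ p, f t p u x * P w p s x) := by
  refine ⟨fun w => iteratedCovDeriv (fun u => Pi.single u 1) f (multiIndexList w),
    fun w => analyticOnNhd_iteratedCovDeriv hf _, ?_, ?_⟩
  · intro t s x _
    simp only [multiIndexList_zero]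
    rfl
  · intro w u t s x hx
    exact iteratedCovDeriv_eqOn_of_perm hUopen hf hR
      (multiIndexList_add_single_perm w u) t s hx

/-- If the curvature functions `R_{tsuv}` vanish identically on `U`, then there exists a family
of functions `P^{<w₁,…,w_k>}_{ts}`, analytic on `U`, with `P^{<0,…,0>}_{ts} = δ_{ts}` and
`P^{<w₁,…,w_u+1,…,w_k>}_{ts} = ∂P^{<w>}_{ts}/∂x_u + ∑_p f_{tpu} P^{<w>}_{ps}` on `U`. -/
theorem stmt_3 (n k : ℕ) (hn : 1 ≤ n) (hk : 1 ≤ k)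
    (U : Set (Fin k → ℝ)) (hUopen : IsOpen U) (hU0 : (0 : Fin k → ℝ) ∈ U)
    (f : Fin n → Fin n → Fin k → (Fin k → ℝ) → ℝ)
    (hf : ∀ r s u, AnalyticOnNhd ℝ (f r s u) U)
    (hR : ∀ x ∈ U, ∀ (t s : Fin n) (u v : Fin k),
      fderiv ℝ (f t s v) x (Pi.single u 1) - fderiv ℝ (f t s u) x (Pi.single v 1)
        + ∑ p, f t p u x * f p s v x - ∑ p, f t p v x * f p s u x = 0) :
    ∃ P : (Fin k → ℕ) → Fin n → Fin n → (Fin k → ℝ) → ℝ,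
      (∀ w t s, AnalyticOnNhd ℝ (P w t s) U) ∧
      (∀ t s, ∀ x ∈ U, P 0 t s x = if t = s then (1 : ℝ) else 0) ∧
      (∀ (w : Fin k → ℕ) (u : Fin k) (t s : Fin n), ∀ x ∈ U,
        P (w + Pi.single u 1) t s x
          = fderiv ℝ (P w t s) x (Pi.single u 1) + ∑ p, f t p u x * P w p s x) :=
  stmt_3_general n k U hUopen f hf hR
end

section
/- Assume R_{tsuv} ≡ 0 on U, and let P^{<w₁,…,w_k>}_{ts} be the family of functions with P^{<0,…,0>}_{ts} = δ_{ts} and P^{<w₁,…,w_u+1,…,w_k>}_{ts} = ∂P^{<w₁,…,w_k>}_{ts}/∂x_u + Σ_{p=1}^n f_{tpu} P^{<w₁,…,w_k>}_{ps} for all u. For 1 ≤ u ≤ k let D_{x_u} act on smooth maps y : U → ℝ^n by (D_{x_u} y)_r = ∂y_r/∂x_u + Σ_{s=1}^n f_{rsu} y_s. Then for all w₁,…,w_k ∈ ℕ, all smooth y : U → ℝ^n, and all 1 ≤ r ≤ n: (D_{x_1}^{w_1} ∘ D_{x_2}^{w_2} ∘ ⋯ ∘ D_{x_k}^{w_k})(y)_r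 = Σ_{m_1=0}^{w_1} ⋯ Σ_{m_k=0}^{w_k} Σ_{s=1}^n P^{<m_1,…,m_k>}_{rs} · (∂^{(w_1−m_1)+⋯+(w_k−m_k)} y_s / ∂x_1^{w_1−m_1} ⋯ ∂x_k^{w_k−m_k}) · (w_1!⋯w_k!)/(m_1!⋯m_k!(w_1−m_1)!⋯(w_k−m_k)!). -/
/-- The operator `D_{x_u}` acting on maps `y : ℝᵏ → ℝⁿ`:
`(D_{x_u} y)_r = ∂y_r/∂x_u + ∑_s f_{rsu} y_s`. -/
noncomputable def Dop {n k : ℕ} (f : Fin n → Fin n → Fin k → (Fin k → ℝ) → ℝ) (u : Fin k)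
    (y : (Fin k → ℝ) → Fin n → ℝ) : (Fin k → ℝ) → Fin n → ℝ :=
  fun x r => fderiv ℝ (fun z => y z r) x (Pi.single u 1) + ∑ s, f r s u x * y x s

/-- The iterated composition `D_{x_1}^{w_1} ∘ D_{x_2}^{w_2} ∘ ⋯ ∘ D_{x_k}^{w_k}`. -/
noncomputable def DopIter {n k : ℕ} (f : Fin n → Fin n → Fin k → (Fin k → ℝ) → ℝ)
    (w : Fin k → ℕ) : ((Fin k → ℝ) → Fin n → ℝ) → ((Fin k → ℝ) → Fin n → ℝ) :=
  (List.ofFn (fun u : Fin k => (Dop f u)^[w u])).foldr (· ∘ ·) id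

/-- The iterated partial derivative `∂^{m_1+⋯+m_k} / ∂x_1^{m_1} ⋯ ∂x_k^{m_k}`. -/
noncomputable def pderivIter {k : ℕ} (m : Fin k → ℕ) :
    ((Fin k → ℝ) → ℝ) → ((Fin k → ℝ) → ℝ) :=
  (List.ofFn (fun u : Fin k =>
    (fun (g : (Fin k → ℝ) → ℝ) (x : Fin k → ℝ) => fderiv ℝ g x (Pi.single u 1))^[m u])).foldr
    (· ∘ ·) id

theorem foldr_peel {α : Type*} : ∀ (k : ℕ) (op : Fin k → α → α) (m : Fin k → ℕ) (u : Fin k),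
    (∀ j, j < u → m j = 0) →
    (List.ofFn fun j => (op j)^[(m + Pi.single u 1 : Fin k → ℕ) j]).foldr (· ∘ ·) id
      = op u ∘ (List.ofFn fun j => (op j)^[m j]).foldr (· ∘ ·) id := by
  intro k
  induction k with
  | zero => intro _ _ u _; exact absurd u.2 (by omega)
  | succ k ih =>
    intro op m u hu
    rw [List.ofFn_succ, List.ofFn_succ, List.foldr_cons, List.foldr_cons]
    rcases Fin.eq_zero_or_eq_succ u with h0 | ⟨j, rfl⟩
    · subst h0
      have h1 : (m + Pi.single (0:Fin (k+1)) 1 : Fin (k+1) → ℕ) 0 = m 0 + 1 := by simp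
      have h3 : (fun i : Fin k =>
            (op i.succ)^[(m + Pi.single (0:Fin (k+1)) 1 : Fin (k+1) → ℕ) i.succ])
          = fun i : Fin k => (op i.succ)^[m i.succ] := by
        funext i
        simp [Pi.single_eq_of_ne (Fin.succ_ne_zero i)]
      rw [h3, h1, Function.iterate_succ']
      rfl
    · have h1 : (m + Pi.single j.succ 1 : Fin (k+1) → ℕ) 0 = m 0 := by
        simp [Pi.single_eq_of_ne (Ne.symm (Fin.succ_ne_zero j))]
      have hm0 : m 0 = 0 := hu 0 (by simp [Fin.pos_iff_ne_zero, Fin.succ_ne_zero])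
      have h2 : (fun i : Fin k =>
            (op i.succ)^[(m + Pi.single j.succ 1 : Fin (k+1) → ℕ) i.succ])
          = fun i : Fin k =>
            (op i.succ)^[((m ∘ Fin.succ) + Pi.single j 1 : Fin k → ℕ) i] := by
        funext i
        congr 1
        simp only [Pi.add_apply, Function.comp_apply]
        congr 1
        rcases eq_or_ne i j with rfl | hij
        · simp
        · rw [Pi.single_eq_of_ne (fun h => hij (Fin.succ_injective _ h)),
            Pi.single_eq_of_ne hij]
      rw [h1, hm0, h2, ih (fun i => op i.succ) (m ∘ Fin.succ) j
        (fun i hij => hu i.succ (by simpa using hij))]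
      simp only [Function.iterate_zero]
      rfl

theorem foldr_zero {α : Type*} (k : ℕ) (op : Fin k → α → α) :
    (List.ofFn fun j : Fin k => (op j)^[(0 : Fin k → ℕ) j]).foldr (· ∘ ·) id = id := by
  induction k with
  | zero => simp
  | succ k ih =>
    rw [List.ofFn_succ, List.foldr_cons]
    have := ih (fun i => op i.succ)
    simp only [Pi.zero_apply, Function.iterate_zero] at this ⊢
    rw [this]
    rfl

theorem foldr_preserves {α : Type*} (Q : α → Prop) :
    ∀ (l : List (α → α)), (∀ g ∈ l, ∀ a, Q a → Q (g a)) → ∀ a, Q a → Q (l.foldr (· ∘ ·) id a) := by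
  intro l
  induction l with
  | nil => intro _ a ha; exact ha
  | cons g t ih =>
    intro h a ha
    rw [List.foldr_cons]
    exact h g (by simp) _ (ih (fun g' hg' => h g' (by simp [hg'])) a ha)



theorem pascal_if (a b : ℕ) : (a+1).choose b = a.choose b + if b = 0 then 0 else a.choose (b-1) := by
  cases b with
  | zero => simp
  | succ b => rw [Nat.choose_succ_succ]; simp [Nat.add_comm]

theorem comb (k : ℕ) (w : Fin k → ℕ) (u : Fin k) (T : (Fin k → ℕ) → ℝ) :
    ∑ m ∈ Finset.Iic (w + Pi.single u 1 : Fin k → ℕ),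
        T m * ((∏ j, ((w + Pi.single u 1 : Fin k → ℕ) j).choose (m j) : ℕ) : ℝ)
      = ∑ m ∈ Finset.Iic w,
          (T m + T (m + Pi.single u 1)) * ((∏ j, (w j).choose (m j) : ℕ) : ℝ) := by
  have hsub : Finset.Iic w ⊆ Finset.Iic (w + Pi.single u 1 : Fin k → ℕ) :=
    Finset.Iic_subset_Iic.mpr (le_add_of_nonneg_right zero_le)
  have hprod : ∀ m : Fin k → ℕ,
      (∏ j, ((w + Pi.single u 1 : Fin k → ℕ) j).choose (m j) : ℕ)
        = ((w u + 1).choose (m u)) * ∏ j ∈ Finset.univ.erase u, (w j).choose (m j) := by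
    intro m
    rw [← Finset.mul_prod_erase Finset.univ _ (Finset.mem_univ u)]
    congr 1
    · simp
    · exact Finset.prod_congr rfl fun j hj => by
        rw [Pi.add_apply, Pi.single_eq_of_ne (Finset.ne_of_mem_erase hj)]; simp
  have hprodw : ∀ m : Fin k → ℕ,
      (∏ j, (w j).choose (m j) : ℕ)
        = ((w u).choose (m u)) * ∏ j ∈ Finset.univ.erase u, (w j).choose (m j) :=
    fun m => (Finset.mul_prod_erase Finset.univ _ (Finset.mem_univ u)).symm
  calc ∑ m ∈ Finset.Iic (w + Pi.single u 1 : Fin k → ℕ),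
        T m * ((∏ j, ((w + Pi.single u 1 : Fin k → ℕ) j).choose (m j) : ℕ) : ℝ)
      = ∑ m ∈ Finset.Iic (w + Pi.single u 1 : Fin k → ℕ),
          (T m * ((∏ j, (w j).choose (m j) : ℕ) : ℝ)
            + (if m u ≠ 0 then T m * (((w u).choose (m u - 1)
                * ∏ j ∈ Finset.univ.erase u, (w j).choose (m j) : ℕ) : ℝ) else 0)) := by
        refine Finset.sum_congr rfl fun m _ => ?_
        rw [hprod m, pascal_if, hprodw m]
        rcases eq_or_ne (m u) 0 with h | h <;> simp [h] <;> push_cast <;> ring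
    _ = ∑ m ∈ Finset.Iic w, T m * ((∏ j, (w j).choose (m j) : ℕ) : ℝ)
          + ∑ m ∈ Finset.Iic w, T (m + Pi.single u 1)
              * ((∏ j, (w j).choose (m j) : ℕ) : ℝ) := by
        rw [Finset.sum_add_distrib]
        congr 1
        · refine (Finset.sum_subset hsub fun m hm hm' => ?_).symm
          simp only [Finset.mem_Iic, Pi.le_def] at hm hm'
          push_neg at hm'
          obtain ⟨j, hj⟩ := hm'
          have hju : j = u := by
            by_contra hne
            have h2 := hm j
            rw [Pi.add_apply, Pi.single_eq_of_ne hne] at h2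
            omega
          subst hju
          have h2 := hm j
          rw [Pi.add_apply, Pi.single_eq_same] at h2
          rw [hprodw m, Nat.choose_eq_zero_of_lt (by omega)]
          simp
        · rw [← Finset.sum_filter]
          refine (Finset.sum_nbij' (i := fun m => m + Pi.single u 1)
            (j := fun m => m - Pi.single u 1) ?_ ?_ ?_ ?_ ?_).symm
          · intro a ha
            simp only [Finset.mem_Iic, Pi.le_def] at ha
            simp only [Finset.mem_filter, Finset.mem_Iic, Pi.le_def]
            refine ⟨fun i => ?_, by simp⟩
            have := ha i
            simp only [Pi.add_apply]
            omega
          · intro a ha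
            simp only [Finset.mem_filter, Finset.mem_Iic, Pi.le_def] at ha
            obtain ⟨ha1, ha2⟩ := ha
            simp only [Finset.mem_Iic, Pi.le_def]
            intro i
            have := ha1 i
            simp only [Pi.sub_apply, Pi.add_apply] at this ⊢
            rcases eq_or_ne i u with rfl | hi
            · simp only [Pi.single_eq_same] at this ⊢; omega
            · rw [Pi.single_eq_of_ne hi] at this ⊢; omega
          · intro a _
            funext i
            simp only [Pi.sub_apply, Pi.add_apply]
            omega
          · intro a ha
            simp only [Finset.mem_filter, Finset.mem_Iic] at ha
            obtain ⟨ha1, ha2⟩ := ha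
            funext i
            simp only [Pi.sub_apply, Pi.add_apply]
            rcases eq_or_ne i u with rfl | hi
            · simp only [Pi.single_eq_same]; omega
            · rw [Pi.single_eq_of_ne hi]; omega
          · intro m hm
            congr 1
            have h1 : (m + Pi.single u 1 : Fin k → ℕ) u - 1 = m u := by
              simp only [Pi.add_apply, Pi.single_eq_same]; omega
            have h2 : ∏ j ∈ Finset.univ.erase u,
                (w j).choose ((m + Pi.single u 1 : Fin k → ℕ) j)
                  = ∏ j ∈ Finset.univ.erase u, (w j).choose (m j) :=
              Finset.prod_congr rfl fun j hj => by
                rw [Pi.add_apply, Pi.single_eq_of_ne (Finset.ne_of_mem_erase hj)]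
                simp
            rw [h1, h2, hprodw m]
    _ = _ := by
        rw [← Finset.sum_add_distrib]
        exact Finset.sum_congr rfl fun m _ => by ring



theorem iterate_preserves {α : Type*} (Q : α → Prop) (g : α → α) (h : ∀ a, Q a → Q (g a)) :
    ∀ j a, Q a → Q (g^[j] a) := by
  intro j
  induction j with
  | zero => intro a ha; exact ha
  | succ j ih => intro a ha; rw [Function.iterate_succ_apply]; exact ih _ (h a ha)

theorem pderiv_smooth {k : ℕ} {U : Set (Fin k → ℝ)} (hU : IsOpen U) (u : Fin k)
    {g : (Fin k → ℝ) → ℝ} (hg : ContDiffOn ℝ (⊤ : ℕ∞) g U) :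
    ContDiffOn ℝ (⊤ : ℕ∞) (fun x => fderiv ℝ g x (Pi.single u 1)) U :=
  (ContinuousLinearMap.apply ℝ ℝ (Pi.single u 1)).contDiff.comp_contDiffOn
    (hg.fderiv_of_isOpen hU (by simp))

theorem pderivIter_smooth {k : ℕ} {U : Set (Fin k → ℝ)} (hU : IsOpen U) (m : Fin k → ℕ)
    {g : (Fin k → ℝ) → ℝ} (hg : ContDiffOn ℝ (⊤ : ℕ∞) g U) :
    ContDiffOn ℝ (⊤ : ℕ∞) (pderivIter m g) U := by
  unfold pderivIter
  refine foldr_preserves (fun h => ContDiffOn ℝ (⊤ : ℕ∞) h U) _ ?_ g hg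
  intro gg hgg a ha
  simp only [List.mem_ofFn] at hgg
  obtain ⟨u, rfl⟩ := hgg
  exact iterate_preserves (fun h => ContDiffOn ℝ (⊤ : ℕ∞) h U) _
    (fun b hb => pderiv_smooth hU u hb) (m u) a ha

theorem pderivIter_peel {k : ℕ} (m : Fin k → ℕ) (u : Fin k) (hu : ∀ j, j < u → m j = 0)
    (g : (Fin k → ℝ) → ℝ) :
    pderivIter (m + Pi.single u 1 : Fin k → ℕ) g
      = fun x => fderiv ℝ (pderivIter m g) x (Pi.single u 1) := by
  unfold pderivIter
  exact congrFun (foldr_peel k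
    (fun u (g : (Fin k → ℝ) → ℝ) (x : Fin k → ℝ) => fderiv ℝ g x (Pi.single u 1)) m u hu) g

theorem DopIter_peel {n k : ℕ} (f : Fin n → Fin n → Fin k → (Fin k → ℝ) → ℝ)
    (w : Fin k → ℕ) (u : Fin k) (hu : ∀ j, j < u → w j = 0) :
    DopIter f (w + Pi.single u 1 : Fin k → ℕ) = Dop f u ∘ DopIter f w := by
  unfold DopIter
  exact foldr_peel k (fun u => Dop f u) w u hu

theorem pderivIter_zero {k : ℕ} (g : (Fin k → ℝ) → ℝ) : pderivIter (0 : Fin k → ℕ) g = g := by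
  unfold pderivIter
  rw [foldr_zero]
  rfl

theorem DopIter_zero {n k : ℕ} (f : Fin n → Fin n → Fin k → (Fin k → ℝ) → ℝ)
    (y : (Fin k → ℝ) → Fin n → ℝ) : DopIter f (0 : Fin k → ℕ) y = y := by
  unfold DopIter
  rw [foldr_zero]
  rfl

theorem sum_pi_fin_eq_sum_Iic {k : ℕ} (w : Fin k → ℕ) (F : (Fin k → ℕ) → ℝ) :
    ∑ m : (∀ u : Fin k, Fin (w u + 1)), F (fun u => (m u : ℕ)) = ∑ m ∈ Finset.Iic w, F m := by
  refine Finset.sum_nbij' (i := fun m => fun u => (m u : ℕ))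
    (j := fun m u => (⟨min (m u) (w u), by omega⟩ : Fin (w u + 1))) ?_ ?_ ?_ ?_ ?_
  · intro a _
    simp only [Finset.mem_Iic, Pi.le_def]
    intro i
    exact Nat.lt_succ_iff.mp (a i).2
  · intro a _; exact Finset.mem_univ _
  · intro a _
    funext i
    ext
    simp only
    exact min_eq_left (Nat.lt_succ_iff.mp (a i).2)
  · intro a ha
    simp only [Finset.mem_Iic, Pi.le_def] at ha
    funext i
    simp only
    exact min_eq_left (ha i)
  · intro a _; rfl


theorem main_key (n k : ℕ)
    (U : Set (Fin k → ℝ)) (hUopen : IsOpen U)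
    (f : Fin n → Fin n → Fin k → (Fin k → ℝ) → ℝ)
    (P : (Fin k → ℕ) → Fin n → Fin n → (Fin k → ℝ) → ℝ)
    (hPanalytic : ∀ w t s, AnalyticOnNhd ℝ (P w t s) U)
    (hP0 : ∀ t s, ∀ x ∈ U, P 0 t s x = if t = s then (1 : ℝ) else 0)
    (hPrec : ∀ (w : Fin k → ℕ) (u : Fin k) (t s : Fin n), ∀ x ∈ U,
      P (w + Pi.single u 1) t s x
        = fderiv ℝ (P w t s) x (Pi.single u 1) + ∑ p, f t p u x * P w p s x)
    (y : (Fin k → ℝ) → Fin n → ℝ) (hy : ContDiffOn ℝ (⊤ : ℕ∞) y U) :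
    ∀ (N : ℕ) (w : Fin k → ℕ), (∑ j, w j) = N → ∀ x ∈ U, ∀ r : Fin n,
      DopIter f w y x r
        = ∑ m ∈ Finset.Iic w,
            (∑ s, P m r s x * pderivIter (w - m) (fun z => y z s) x)
              * ((∏ j, (w j).choose (m j) : ℕ) : ℝ) := by
  have hys : ∀ s, ContDiffOn ℝ (⊤ : ℕ∞) (fun z => y z s) U := fun s => (contDiffOn_pi.mp hy) s
  intro N
  induction N with
  | zero =>
    intro w hw x hx r
    have hw0 : w = 0 := funext fun j =>
      (Finset.sum_eq_zero_iff.mp hw) j (Finset.mem_univ j)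
    subst hw0
    rw [DopIter_zero]
    have hIic : Finset.Iic (0 : Fin k → ℕ) = {0} := by
      ext m
      simp [Finset.mem_Iic, le_zero_iff]
    rw [hIic, Finset.sum_singleton]
    have h1 : ((0 : Fin k → ℕ) - 0 : Fin k → ℕ) = 0 := by simp
    rw [h1]
    simp only [pderivIter_zero]
    have h2 : ∀ s : Fin n, P 0 r s x = if r = s then (1:ℝ) else 0 := fun s => hP0 r s x hx
    simp only [h2, Pi.zero_apply, Nat.choose_self, Finset.prod_const_one, Nat.cast_one,
      mul_one, ite_mul, one_mul, zero_mul]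
    rw [Finset.sum_ite_eq]
    simp
  | succ N ih =>
    intro w hw x hx r
    -- find the least index with nonzero exponent
    have hex : ∃ j, w j ≠ 0 := by
      by_contra h
      push_neg at h
      rw [Finset.sum_eq_zero (fun j _ => h j)] at hw
      omega
    have hSne : (Finset.univ.filter (fun j => w j ≠ 0)).Nonempty :=
      ⟨hex.choose, by simp [hex.choose_spec]⟩
    set u := (Finset.univ.filter (fun j => w j ≠ 0)).min' hSne with hu
    have huw : w u ≠ 0 := by
      have := Finset.min'_mem _ hSne
      simpa using this
    have hmin : ∀ j, j < u → w j = 0 := by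
      intro j hj
      by_contra hjw
      exact absurd hj (not_lt.mpr (Finset.min'_le _ j (by simp [hjw])))
    set w' : Fin k → ℕ := fun j => w j - (Pi.single u 1 : Fin k → ℕ) j with hw'def
    have hww : w = w' + Pi.single u 1 := by
      funext j
      simp only [hw'def, Pi.add_apply]
      rcases eq_or_ne j u with rfl | hj
      · simp only [Pi.single_eq_same]; omega
      · rw [Pi.single_eq_of_ne hj]; omega
    have hzero : ∀ j, j < u → w' j = 0 := fun j hj => by
      simp [hw'def, hmin j hj]
    have hsum' : ∑ j, w' j = N := by
      have h1 : ∑ j, w j = (∑ j, w' j) + ∑ j, (Pi.single u 1 : Fin k → ℕ) j := by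
        conv_lhs => rw [hww]
        rw [← Finset.sum_add_distrib]
        rfl
      have h2 : ∑ j, (Pi.single u 1 : Fin k → ℕ) j = 1 := by
        simp [Finset.sum_pi_single']
      omega
    -- abbreviations
    set C : (Fin k → ℕ) → ℝ := fun m => ((∏ j, (w' j).choose (m j) : ℕ) : ℝ) with hC
    set Q : (Fin k → ℕ) → Fin n → (Fin k → ℝ) → ℝ :=
      fun m s => pderivIter (w' - m) (fun z => y z s) with hQ
    set H : Fin n → (Fin k → ℝ) → ℝ :=
      fun r' z => ∑ m ∈ Finset.Iic w', (∑ s, P m r' s z * Q m s z) * C m with hH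
    have hIH : ∀ z ∈ U, ∀ r', DopIter f w' y z r' = H r' z := fun z hz r' =>
      ih w' hsum' z hz r'
    -- peel one operator
    have hpeel : DopIter f w y = Dop f u (DopIter f w' y) := by
      rw [hww, DopIter_peel f w' u hzero]
      rfl
    rw [hpeel]
    -- differentiability ingredients
    have hPd : ∀ (m : Fin k → ℕ) (r' s : Fin n),
        HasFDerivAt (P m r' s) (fderiv ℝ (P m r' s) x) x :=
      fun m r' s => ((hPanalytic m r' s x hx).differentiableAt).hasFDerivAt
    have hQd : ∀ (m : Fin k → ℕ) (s : Fin n),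
        HasFDerivAt (Q m s) (fderiv ℝ (Q m s) x) x := by
      intro m s
      have hQs : ContDiffOn ℝ (⊤ : ℕ∞) (Q m s) U := pderivIter_smooth hUopen _ (hys s)
      exact (((hQs.differentiableOn (by simp))).differentiableAt (hUopen.mem_nhds hx)).hasFDerivAt
    have hHd : ∀ r', HasFDerivAt (H r')
        (∑ m ∈ Finset.Iic w', C m • (∑ s, (P m r' s x • fderiv ℝ (Q m s) x
          + Q m s x • fderiv ℝ (P m r' s) x))) x := by
      intro r'
      exact HasFDerivAt.fun_sum fun m _ =>
        (HasFDerivAt.fun_sum fun s _ => (hPd m r' s).mul (hQd m s)).mul_const (C m)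
    -- replace the fderiv of DopIter by the fderiv of H
    have h_eq : ∀ r', (fun z => DopIter f w' y z r') =ᶠ[nhds x] H r' :=
      fun r' => Filter.eventuallyEq_of_mem (hUopen.mem_nhds hx) (fun z hz => hIH z hz r')
    have h_fd : fderiv ℝ (fun z => DopIter f w' y z r) x (Pi.single u 1)
        = ∑ m ∈ Finset.Iic w', C m * (∑ s, (P m r s x * fderiv ℝ (Q m s) x (Pi.single u 1)
            + Q m s x * fderiv ℝ (P m r s) x (Pi.single u 1))) := by
      rw [(h_eq r).fderiv_eq, (hHd r).fderiv]
      simp [ContinuousLinearMap.sum_apply, ContinuousLinearMap.smul_apply,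
        ContinuousLinearMap.add_apply, smul_eq_mul, Finset.sum_apply']
    -- identify the derivative of Q with a pderivIter
    have hQpeel : ∀ m ∈ Finset.Iic w', ∀ s : Fin n,
        fderiv ℝ (Q m s) x (Pi.single u 1) = pderivIter (w - m) (fun z => y z s) x := by
      intro m hm s
      simp only [Finset.mem_Iic, Pi.le_def] at hm
      have h0 : ∀ j, j < u → (w' - m : Fin k → ℕ) j = 0 := fun j hj => by
        simp [Pi.sub_apply, hzero j hj]
      have h1 := pderivIter_peel (w' - m : Fin k → ℕ) u h0 (fun z => y z s)
      have h2 : ((w' - m : Fin k → ℕ) + Pi.single u 1 : Fin k → ℕ) = w - m := by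
        funext j
        have hmj := hm j
        simp only [Pi.add_apply, Pi.sub_apply]
        rcases eq_or_ne j u with rfl | hj
        · simp only [Pi.single_eq_same]
          have hwj : w u = w' u + 1 := by
            rw [hww]; simp [Pi.single_eq_same]
          omega
        · rw [Pi.single_eq_of_ne hj]
          have hwj : w j = w' j := by
            rw [hww]; simp [Pi.single_eq_of_ne hj]
          omega
      rw [hQ]
      rw [← congrFun h1 x]
      rw [h2]
    -- identify w - (m + e_u) with w' - m
    have hwm : ∀ m : Fin k → ℕ, (w - (m + Pi.single u 1) : Fin k → ℕ) = w' - m := by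
      intro m
      funext j
      simp only [Pi.sub_apply, Pi.add_apply]
      rcases eq_or_ne j u with rfl | hj
      · have hwj : w u = w' u + 1 := by rw [hww]; simp [Pi.single_eq_same]
        simp only [Pi.single_eq_same]
        omega
      · have hwj : w j = w' j := by rw [hww]; simp [Pi.single_eq_of_ne hj]
        rw [Pi.single_eq_of_ne hj]
        omega
    -- the summand function
    set T : (Fin k → ℕ) → ℝ :=
      fun μ => ∑ s, P μ r s x * pderivIter (w - μ) (fun z => y z s) x with hT
    -- compute the left side
    have hLHS : Dop f u (DopIter f w' y) x r
        = ∑ m ∈ Finset.Iic w', (T m + T (m + Pi.single u 1)) * C m := by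
      have hDop : Dop f u (DopIter f w' y) x r
          = fderiv ℝ (fun z => DopIter f w' y z r) x (Pi.single u 1)
            + ∑ t, f r t u x * DopIter f w' y x t := rfl
      rw [hDop, h_fd]
      have hsecond : ∑ t, f r t u x * DopIter f w' y x t
          = ∑ m ∈ Finset.Iic w', C m * ∑ s, Q m s x * (∑ t, f r t u x * P m t s x) := by
        calc ∑ t, f r t u x * DopIter f w' y x t
            = ∑ t, f r t u x * ∑ m ∈ Finset.Iic w', (∑ s, P m t s x * Q m s x) * C m := by
              exact Finset.sum_congr rfl fun t _ => by rw [hIH x hx t]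
          _ = ∑ t, ∑ m ∈ Finset.Iic w', f r t u x * ((∑ s, P m t s x * Q m s x) * C m) := by
              exact Finset.sum_congr rfl fun t _ => Finset.mul_sum _ _ _
          _ = ∑ m ∈ Finset.Iic w', ∑ t, f r t u x * ((∑ s, P m t s x * Q m s x) * C m) :=
              Finset.sum_comm
          _ = ∑ m ∈ Finset.Iic w', C m * ∑ s, Q m s x * (∑ t, f r t u x * P m t s x) := by
              refine Finset.sum_congr rfl fun m _ => ?_
              rw [Finset.mul_sum]
              rw [show (∑ t, f r t u x * ((∑ s, P m t s x * Q m s x) * C m))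
                  = ∑ t, ∑ s, f r t u x * (P m t s x * Q m s x * C m) from
                Finset.sum_congr rfl fun t _ => by rw [Finset.sum_mul, Finset.mul_sum]]
              rw [Finset.sum_comm]
              refine Finset.sum_congr rfl fun s _ => ?_
              rw [Finset.mul_sum, Finset.mul_sum]
              exact Finset.sum_congr rfl fun t _ => by ring
      rw [hsecond, ← Finset.sum_add_distrib]
      refine Finset.sum_congr rfl fun m hm => ?_
      have hQp := hQpeel m hm
      have hPr : ∀ s, fderiv ℝ (P m r s) x (Pi.single u 1) + ∑ t, f r t u x * P m t s x
          = P (m + Pi.single u 1) r s x := fun s => (hPrec m u r s x hx).symm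
      calc C m * (∑ s, (P m r s x * fderiv ℝ (Q m s) x (Pi.single u 1)
              + Q m s x * fderiv ℝ (P m r s) x (Pi.single u 1)))
            + C m * ∑ s, Q m s x * (∑ t, f r t u x * P m t s x)
          = C m * ∑ s, (P m r s x * pderivIter (w - m) (fun z => y z s) x
              + Q m s x * P (m + Pi.single u 1) r s x) := by
            rw [← mul_add, ← Finset.sum_add_distrib]
            congr 1
            refine Finset.sum_congr rfl fun s _ => ?_
            rw [hQp s, ← hPr s]
            ring
        _ = (T m + T (m + Pi.single u 1)) * C m := by
            have hQx : ∀ s, Q m s x = pderivIter (w - (m + Pi.single u 1)) (fun z => y z s) x :=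
              fun s => by rw [hQ, hwm m]
            simp only [hQx, hT]
            rw [← Finset.sum_add_distrib, mul_comm]
            congr 1
            exact Finset.sum_congr rfl fun s _ => by ring
    rw [hLHS]
    -- apply the combinatorial identity
    have hcomb := comb k w' u T
    simp only [hC]
    rw [← hcomb]
    conv_lhs => rw [← hww]

/-- Assume `R ≡ 0` on `U` and `P^{<w>}` is a family with `P^{<0,…,0>}_{ts} = δ_{ts}` and
`P^{<w + e_u>}_{ts} = ∂P^{<w>}_{ts}/∂x_u + ∑_p f_{tpu} P^{<w>}_{ps}`. Then, for every smooth
`y : U → ℝⁿ` and every multi-index `(w₁,…,w_k)`,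
`(D_{x_1}^{w_1} ∘ ⋯ ∘ D_{x_k}^{w_k})(y)_r = ∑_{m ≤ w} ∑_s P^{<m>}_{rs} ·
  ∂^{|w−m|} y_s / ∂x^{w−m} · w!/(m!(w−m)!)`. -/
theorem stmt_4 (n k : ℕ) (hn : 1 ≤ n) (hk : 1 ≤ k)
    (U : Set (Fin k → ℝ)) (hUopen : IsOpen U) (hU0 : (0 : Fin k → ℝ) ∈ U)
    (f : Fin n → Fin n → Fin k → (Fin k → ℝ) → ℝ)
    (hf : ∀ r s u, AnalyticOnNhd ℝ (f r s u) U)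
    (hR : ∀ x ∈ U, ∀ (t s : Fin n) (u v : Fin k),
      fderiv ℝ (f t s v) x (Pi.single u 1) - fderiv ℝ (f t s u) x (Pi.single v 1)
        + ∑ p, f t p u x * f p s v x - ∑ p, f t p v x * f p s u x = 0)
    (P : (Fin k → ℕ) → Fin n → Fin n → (Fin k → ℝ) → ℝ)
    (hPanalytic : ∀ w t s, AnalyticOnNhd ℝ (P w t s) U)
    (hP0 : ∀ t s, ∀ x ∈ U, P 0 t s x = if t = s then (1 : ℝ) else 0)
    (hPrec : ∀ (w : Fin k → ℕ) (u : Fin k) (t s : Fin n), ∀ x ∈ U,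
      P (w + Pi.single u 1) t s x
        = fderiv ℝ (P w t s) x (Pi.single u 1) + ∑ p, f t p u x * P w p s x) :
    ∀ (w : Fin k → ℕ) (y : (Fin k → ℝ) → Fin n → ℝ), ContDiffOn ℝ (⊤ : ℕ∞) y U →
      ∀ x ∈ U, ∀ r : Fin n,
        DopIter f w y x r
          = ∑ m : (∀ u : Fin k, Fin (w u + 1)), ∑ s : Fin n,
              P (fun u => (m u : ℕ)) r s x
                * pderivIter (fun u => w u - (m u : ℕ)) (fun z => y z s) x
                * (((∏ u, (w u).factorial : ℕ) : ℝ)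
                    / (((∏ u, ((m u : ℕ)).factorial : ℕ) : ℝ)
                        * ((∏ u, (w u - (m u : ℕ)).factorial : ℕ) : ℝ))) := by
  intro w y hy x hx r
  rw [main_key n k U hUopen f P hPanalytic hP0 hPrec y hy (∑ j, w j) w rfl x hx r]
  have hcoef : ∀ m ∈ Finset.Iic w,
      (((∏ u, (w u).factorial : ℕ) : ℝ)
          / (((∏ u, (m u).factorial : ℕ) : ℝ) * ((∏ u, (w u - m u).factorial : ℕ) : ℝ)))
        = ((∏ j, (w j).choose (m j) : ℕ) : ℝ) := by
    intro m hm
    simp only [Finset.mem_Iic, Pi.le_def] at hm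
    have key : (∏ j, (w j).choose (m j)) * ((∏ u, (m u).factorial)
        * (∏ u, (w u - m u).factorial)) = ∏ u, (w u).factorial := by
      rw [← Finset.prod_mul_distrib, ← Finset.prod_mul_distrib]
      exact Finset.prod_congr rfl fun j _ => by
        rw [← mul_assoc, Nat.choose_mul_factorial_mul_factorial (hm j)]
    have h1 : (0:ℕ) < ∏ u, (m u).factorial :=
      Finset.prod_pos fun _ _ => Nat.factorial_pos _
    have h2 : (0:ℕ) < ∏ u, (w u - m u).factorial :=
      Finset.prod_pos fun _ _ => Nat.factorial_pos _
    have hne : (((∏ u, (m u).factorial : ℕ) : ℝ)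
        * ((∏ u, (w u - m u).factorial : ℕ) : ℝ)) ≠ 0 :=
      mul_ne_zero (Nat.cast_ne_zero.mpr h1.ne') (Nat.cast_ne_zero.mpr h2.ne')
    rw [div_eq_iff hne]
    have hcast := congrArg (Nat.cast (R := ℝ)) key
    rw [Nat.cast_mul, Nat.cast_mul] at hcast
    exact hcast.symm
  set F : (Fin k → ℕ) → ℝ := fun m => ∑ s : Fin n,
    P m r s x * pderivIter (fun u => w u - m u) (fun z => y z s) x
      * (((∏ u, (w u).factorial : ℕ) : ℝ)
          / (((∏ u, (m u).factorial : ℕ) : ℝ)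
              * ((∏ u, (w u - m u).factorial : ℕ) : ℝ))) with hF
  calc ∑ m ∈ Finset.Iic w,
        (∑ s, P m r s x * pderivIter (w - m) (fun z => y z s) x)
          * ((∏ j, (w j).choose (m j) : ℕ) : ℝ)
      = ∑ m ∈ Finset.Iic w, F m := by
        refine Finset.sum_congr rfl fun m hm => ?_
        rw [hF]
        simp only
        rw [Finset.sum_mul]
        refine Finset.sum_congr rfl fun s _ => ?_
        rw [hcoef m hm]
        rfl
    _ = ∑ m : (∀ u : Fin k, Fin (w u + 1)), F (fun u => (m u : ℕ)) :=
        (sum_pi_fin_eq_sum_Iic w F).symm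
    _ = _ := Finset.sum_congr rfl fun m _ => rfl
end

section
/- Let y, z : V → ℝ^n be analytic solutions on a connected neighborhood V ⊆ U of 0 of the system ∂y_r/∂x_u + Σ_{s=1}^n f_{rsu} y_s = 0 (for all 1 ≤ r ≤ n, 1 ≤ u ≤ k), with y(0) = z(0). Then y = z on a neighborhood of 0. -/
/-!
Along a ray `t ↦ t • x` inside a star-shaped domain, a solution of the system restricts to a
solution of the linear ODE `g' = -A t *ᵥ g` with `A t r s = ∑ u, x u * f r s u (t • x)`.
On `[0, 1]` this coefficient matrix is continuous, hence bounded, so the right-hand side is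
uniformly Lipschitz and the uniqueness theorem for ODEs, applied with `g 0 = y 0 = z 0`,
gives `y x = z x`.
-/
open Set Matrix

theorem eqOn_Icc_of_linear_ODE {E : Type*} [NormedAddCommGroup E] [NormedSpace ℝ E]
    {A : ℝ → E →L[ℝ] E} {a b : ℝ} (hA : ContinuousOn A (Icc a b)) {g h : ℝ → E}
    (hg : ContinuousOn g (Icc a b)) (hg' : ∀ t ∈ Ico a b, HasDerivWithinAt g (A t (g t)) (Ici t) t)
    (hh : ContinuousOn h (Icc a b)) (hh' : ∀ t ∈ Ico a b, HasDerivWithinAt h (A t (h t)) (Ici t) t)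
    (ha : g a = h a) : EqOn g h (Icc a b) := by
  obtain ⟨C, hC⟩ := isCompact_Icc.exists_bound_of_continuousOn hA
  have hlip (t : ℝ) (ht : t ∈ Ico a b) : LipschitzOnWith C.toNNReal (A t) univ := by
    refine ((A t).lipschitz.weaken ?_).lipschitzOnWith
    rw [← NNReal.coe_le_coe, coe_nnnorm]
    exact (hC t (Ico_subset_Icc_self ht)).trans (Real.le_coe_toNNReal C)
  exact ODE_solution_unique_of_mem_Icc_right hlip hg hg' (fun _ _ ↦ trivial) hh hh'
    (fun _ _ ↦ trivial) ha

theorem eqOn_Icc_of_hasDerivWithinAt_mulVec {ι : Type*} [Fintype ι] [DecidableEq ι]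
    {A : ℝ → Matrix ι ι ℝ} {a b : ℝ} (hA : ContinuousOn A (Icc a b)) {g h : ℝ → ι → ℝ}
    (hg : ContinuousOn g (Icc a b)) (hg' : ∀ t ∈ Ico a b, HasDerivWithinAt g (A t *ᵥ g t) (Ici t) t)
    (hh : ContinuousOn h (Icc a b)) (hh' : ∀ t ∈ Ico a b, HasDerivWithinAt h (A t *ᵥ h t) (Ici t) t)
    (ha : g a = h a) : EqOn g h (Icc a b) :=
  let toCLM : Matrix ι ι ℝ →ₗ[ℝ] (ι → ℝ) →L[ℝ] ι → ℝ :=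
    LinearMap.toContinuousLinearMap.toLinearMap ∘ₗ Matrix.toLin'.toLinearMap
  eqOn_Icc_of_linear_ODE (A := fun t ↦ toCLM (A t))
    (toCLM.continuous_of_finiteDimensional.comp_continuousOn hA) hg hg' hh hh' ha

namespace LinearSystem

variable {ι κ : Type*} (f : ι → ι → κ → (κ → ℝ) → ℝ)

def IsSolution [Fintype ι] [DecidableEq κ] (V : Set (κ → ℝ)) (y : (κ → ℝ) → ι → ℝ) : Prop :=
  ∀ x ∈ V, ∀ r u, fderiv ℝ (fun t ↦ y t r) x (Pi.single u 1) + ∑ s, f r s u x * y x s = 0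

-- Contracting the system with a direction `v` gives `∂_v y = -dirCoeff f p v *ᵥ y`.
def dirCoeff [Fintype κ] (p v : κ → ℝ) : Matrix ι ι ℝ :=
  Matrix.of fun r s ↦ ∑ u, v u * f r s u p

variable {f} {V W : Set (κ → ℝ)} {y z : (κ → ℝ) → ι → ℝ}

theorem continuousOn_dirCoeff_comp_smul [Fintype κ] (hf : ∀ r s u, ContinuousOn (f r s u) V)
    {x : κ → ℝ} {I : Set ℝ} (hI : ∀ t ∈ I, t • x ∈ V) :
    ContinuousOn (fun t : ℝ ↦ dirCoeff f (t • x) x) I := by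
  have hline : ContinuousOn (fun t : ℝ ↦ t • x) I :=
    (continuous_id.smul continuous_const).continuousOn
  refine continuousOn_pi.2 fun r ↦ continuousOn_pi.2 fun s ↦ ?_
  exact continuousOn_finsetSum _ fun u _ ↦ continuousOn_const.mul ((hf r s u).comp hline hI)

variable [Fintype ι] [DecidableEq κ]

theorem IsSolution.mono (hy : IsSolution f V y) (hWV : W ⊆ V) : IsSolution f W y :=
  fun x hx ↦ hy x (hWV hx)

variable [Fintype κ]

theorem IsSolution.fderiv_apply (hy : IsSolution f V y) {p : κ → ℝ} (hp : p ∈ V)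
    (hyp : DifferentiableAt ℝ y p) (v : κ → ℝ) :
    fderiv ℝ y p v = -(dirCoeff f p v *ᵥ y p) := by
  ext r
  have hr : ∀ u, fderiv ℝ y p (Pi.single u 1) r = -∑ s, f r s u p * y p s := fun u ↦ by
    rw [eq_neg_iff_add_eq_zero, ← hy p hp r u, _root_.fderiv_apply hyp]
    rfl
  conv_lhs => rw [pi_eq_sum_univ' v]
  simp only [map_sum, map_smul, Finset.sum_apply, Pi.smul_apply, smul_eq_mul, hr, Pi.neg_apply,
    mulVec, dotProduct, dirCoeff, of_apply, Finset.sum_mul, mul_neg, Finset.sum_neg_distrib]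
  rw [Finset.sum_comm]
  simp only [Finset.mul_sum, mul_assoc]

theorem IsSolution.hasDerivAt_comp_smul (hy : IsSolution f V y) {x : κ → ℝ} {t : ℝ}
    (ht : t • x ∈ V) (hyt : DifferentiableAt ℝ y (t • x)) :
    HasDerivAt (fun τ : ℝ ↦ y (τ • x)) (-dirCoeff f (t • x) x *ᵥ y (t • x)) t := by
  have := hyt.hasFDerivAt.comp_hasDerivAt t ((hasDerivAt_id t).smul_const x)
  rw [one_smul] at this
  rw [neg_mulVec, ← hy.fderiv_apply ht hyt]
  exact this

theorem IsSolution.eqOn_of_starConvex (hV : IsOpen V) (hV0 : StarConvex ℝ 0 V)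
    (hf : ∀ r s u, ContinuousOn (f r s u) V) (hy : IsSolution f V y) (hz : IsSolution f V z)
    (hyd : DifferentiableOn ℝ y V) (hzd : DifferentiableOn ℝ z V) (h0 : y 0 = z 0) :
    EqOn y z V := by
  classical
  intro x hx
  have hseg : ∀ t ∈ Icc (0 : ℝ) 1, t • x ∈ V := fun t ht ↦ hV0.smul_mem hx ht.1 ht.2
  have hline : ContinuousOn (fun t : ℝ ↦ t • x) (Icc 0 1) :=
    (continuous_id.smul continuous_const).continuousOn
  have hray {w : (κ → ℝ) → ι → ℝ} (hw : IsSolution f V w) (hwd : DifferentiableOn ℝ w V)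
      (t : ℝ) (ht : t ∈ Ico (0 : ℝ) 1) :
      HasDerivWithinAt (fun τ : ℝ ↦ w (τ • x)) (-dirCoeff f (t • x) x *ᵥ w (t • x)) (Ici t) t :=
    have hxt := hseg t (Ico_subset_Icc_self ht)
    (hw.hasDerivAt_comp_smul hxt (hwd.differentiableAt (hV.mem_nhds hxt))).hasDerivWithinAt
  simpa using eqOn_Icc_of_hasDerivWithinAt_mulVec
    (continuousOn_dirCoeff_comp_smul hf hseg).neg (hyd.continuousOn.comp hline hseg)
    (hray hy hyd) (hzd.continuousOn.comp hline hseg) (hray hz hzd) (by simpa using h0)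
    (right_mem_Icc.2 zero_le_one)

end LinearSystem

theorem stmt_8_general (n k : ℕ)
    (U : Set (Fin k → ℝ))
    (f : Fin n → Fin n → Fin k → (Fin k → ℝ) → ℝ)
    (hf : ∀ r s u, AnalyticOnNhd ℝ (f r s u) U)
    (V : Set (Fin k → ℝ)) (hVopen : IsOpen V)
    (hV0 : (0 : Fin k → ℝ) ∈ V) (hVU : V ⊆ U)
    (y z : (Fin k → ℝ) → Fin n → ℝ)
    (hy : AnalyticOnNhd ℝ y V) (hz : AnalyticOnNhd ℝ z V)
    (hysys : ∀ x ∈ V, ∀ (r : Fin n) (u : Fin k),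
      fderiv ℝ (fun t => y t r) x (Pi.single u 1) + ∑ s, f r s u x * y x s = 0)
    (hzsys : ∀ x ∈ V, ∀ (r : Fin n) (u : Fin k),
      fderiv ℝ (fun t => z t r) x (Pi.single u 1) + ∑ s, f r s u x * z x s = 0)
    (h0 : y 0 = z 0) :
    ∃ V' : Set (Fin k → ℝ), IsOpen V' ∧ (0 : Fin k → ℝ) ∈ V' ∧ Set.EqOn y z V' := by
  obtain ⟨ε, hε, hball⟩ := Metric.isOpen_iff.mp hVopen 0 hV0
  refine ⟨Metric.ball 0 ε, Metric.isOpen_ball, Metric.mem_ball_self hε, ?_⟩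
  have hysol : LinearSystem.IsSolution f V y := hysys
  have hzsol : LinearSystem.IsSolution f V z := hzsys
  exact (hysol.mono hball).eqOn_of_starConvex Metric.isOpen_ball
    ((convex_ball 0 ε).starConvex (Metric.mem_ball_self hε))
    (fun r s u ↦ (hf r s u).continuousOn.mono (hball.trans hVU)) (hzsol.mono hball)
    (hy.differentiableOn.mono hball) (hz.differentiableOn.mono hball) h0

/-- Uniqueness: two analytic solutions of the linear system
`∂y_r/∂x_u + ∑_s f_{rsu} y_s = 0` on a connected neighborhood `V ⊆ U` of `0` that agree at `0`
coincide on a neighborhood of `0`. -/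
theorem stmt_8 (n k : ℕ) (hn : 1 ≤ n) (hk : 1 ≤ k)
    (U : Set (Fin k → ℝ)) (hUopen : IsOpen U) (hU0 : (0 : Fin k → ℝ) ∈ U)
    (f : Fin n → Fin n → Fin k → (Fin k → ℝ) → ℝ)
    (hf : ∀ r s u, AnalyticOnNhd ℝ (f r s u) U)
    (V : Set (Fin k → ℝ)) (hVopen : IsOpen V) (hVconn : IsConnected V)
    (hV0 : (0 : Fin k → ℝ) ∈ V) (hVU : V ⊆ U)
    (y z : (Fin k → ℝ) → Fin n → ℝ)
    (hy : AnalyticOnNhd ℝ y V) (hz : AnalyticOnNhd ℝ z V)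
    (hysys : ∀ x ∈ V, ∀ (r : Fin n) (u : Fin k),
      fderiv ℝ (fun t => y t r) x (Pi.single u 1) + ∑ s, f r s u x * y x s = 0)
    (hzsys : ∀ x ∈ V, ∀ (r : Fin n) (u : Fin k),
      fderiv ℝ (fun t => z t r) x (Pi.single u 1) + ∑ s, f r s u x * z x s = 0)
    (h0 : y 0 = z 0) :
    ∃ V' : Set (Fin k → ℝ), IsOpen V' ∧ (0 : Fin k → ℝ) ∈ V' ∧ Set.EqOn y z V' :=
  stmt_8_general n k U f hf V hVopen hV0 hVU y z hy hz hysys hzsys h0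
end

section
/- Fix x ∈ U, multi-indices α, β, γ ∈ ℤ^n and 1 ≤ u, v ≤ k. Assume that each h_{αβu} is differentiable at x and that for every pair of multi-indices μ, ν ∈ ℤ^n and every pair of indices 1 ≤ u', v' ≤ k the family (δ ∈ ℤ^n ↦ h_{δνv'}(x) · h_{μδu'}(x)) is summable, so that R_{μνu'v'}(x) is defined. Then R_{(α+β)γuv}(x) = R_{α(γ−β)uv}(x) + R_{β(γ−α)uv}(x). -/
/-!
Read as matrices on the basis `(e^{iα·θ})_{α ∈ ℤⁿ}` of Fourier modes, `h_{·,·,u}` is the matrix of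
a derivation, and the additivity of `h_{αβu}` in `α` at fixed `β - α` is exactly the Leibniz rule
`h_{(α+β)γ} = h_{α(γ-β)} + h_{β(γ-α)}`. This rule survives differentiation in `x`, sums, and
commutators, and `R_{··uv}` is built from these operations. For the commutator, the series can only
be reindexed jointly: after the shifts `t ↦ t - β` and `t ↦ t - α` a cross term is left which is
odd under `t ↦ γ + α + β - t`, so its sum vanishes.
-/

/-- `h_{αβu} = ∑_{s=1}^n α_s · f_{s,(β−α+e_s),u}`. -/
noncomputable def hfun {n k : ℕ} (f : Fin n → (Fin n → ℤ) → Fin k → (Fin k → ℝ) → ℝ)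
    (α β : Fin n → ℤ) (u : Fin k) (x : Fin k → ℝ) : ℝ :=
  ∑ s, (α s : ℝ) * f s (β - α + Pi.single s 1) u x

/-- `R_{αβuv} = ∂h_{αβv}/∂x_u − ∂h_{αβu}/∂x_v + ∑_{t∈ℤⁿ} h_{tβv} h_{αtu} − ∑_{t∈ℤⁿ} h_{tβu} h_{αtv}`. -/
noncomputable def Rfun {n k : ℕ} (f : Fin n → (Fin n → ℤ) → Fin k → (Fin k → ℝ) → ℝ)
    (α β : Fin n → ℤ) (u v : Fin k) (x : Fin k → ℝ) : ℝ :=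
  fderiv ℝ (hfun f α β v) x (Pi.single u 1) - fderiv ℝ (hfun f α β u) x (Pi.single v 1)
    + ∑' t : Fin n → ℤ, hfun f t β v x * hfun f α t u x
    - ∑' t : Fin n → ℤ, hfun f t β u x * hfun f α t v x

variable {G : Type*} [AddCommGroup G]

/-- The Leibniz rule for the matrix `A` of an operator on the group algebra of `G`:
`A (μ + ν) γ` is the `γ`-coefficient of the image of `e^μ e^ν`. -/
def IsLeibnizKernel {M : Type*} [Add M] (A : G → G → M) : Prop :=
  ∀ μ ν γ, A (μ + ν) γ = A μ (γ - ν) + A ν (γ - μ)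

lemma tsum_eq_zero_of_apply_sub_eq_neg {R : Type*} [AddCommGroup R] [TopologicalSpace R]
    [IsTopologicalAddGroup R] [T2Space R] [IsAddTorsionFree R] {K : G → R} (c : G)
    (hK : ∀ t, K (c - t) = -K t) : ∑' t, K t = 0 := by
  have h : ∑' t, K t = -∑' t, K t :=
    calc ∑' t, K t = ∑' t, K (c - t) := ((Equiv.subLeft c).tsum_eq K).symm
      _ = -∑' t, K t := by rw [tsum_congr hK, tsum_neg]
  exact self_eq_neg.mp h

namespace IsLeibnizKernel

lemma add {M : Type*} [AddCommMonoid M] {A B : G → G → M} (hA : IsLeibnizKernel A)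
    (hB : IsLeibnizKernel B) : IsLeibnizKernel fun μ ν => A μ ν + B μ ν := by
  intro μ ν γ
  simp only [hA μ ν γ, hB μ ν γ]
  abel

lemma sub {M : Type*} [AddCommGroup M] {A B : G → G → M} (hA : IsLeibnizKernel A)
    (hB : IsLeibnizKernel B) : IsLeibnizKernel fun μ ν => A μ ν - B μ ν := by
  intro μ ν γ
  simp only [hA μ ν γ, hB μ ν γ]
  abel

lemma fderiv_apply {𝕜 E F : Type*} [NontriviallyNormedField 𝕜] [NormedAddCommGroup E]
    [NormedSpace 𝕜 E] [NormedAddCommGroup F] [NormedSpace 𝕜 F] {A : G → G → E → F} {x : E}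
    (hA : ∀ y, IsLeibnizKernel fun μ ν => A μ ν y) (hd : ∀ μ ν, DifferentiableAt 𝕜 (A μ ν) x)
    (w : E) : IsLeibnizKernel fun μ ν => fderiv 𝕜 (A μ ν) x w := by
  intro μ ν γ
  have hsplit : A (μ + ν) γ = A μ (γ - ν) + A ν (γ - μ) := funext fun y => hA y μ ν γ
  simp only [hsplit, fderiv_add (hd _ _) (hd _ _)]
  rfl

variable {R : Type*} [CommRing R]

lemma commutator_summand_add {A B : G → G → R} (hA : IsLeibnizKernel A)
    (hB : IsLeibnizKernel B) (α β γ t : G) :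
    A t γ * B (α + β) t - B t γ * A (α + β) t =
      (A (t - β) (γ - β) * B α (t - β) - B (t - β) (γ - β) * A α (t - β))
        + (A (t - α) (γ - α) * B β (t - α) - B (t - α) (γ - α) * A β (t - α))
        + ((A β (γ - (t - β)) * B α (t - β) - B β (γ - (t - β)) * A α (t - β))
          - (A β (γ - (γ + α - t)) * B α (γ + α - t)
            - B β (γ - (γ + α - t)) * A α (γ + α - t))) := by
  have hAβ := hA (t - β) β γ
  have hBβ := hB (t - β) β γ
  have hAα := hA (t - α) α γ
  have hBα := hB (t - α) α γ
  rw [sub_add_cancel] at hAβ hBβ hAα hBα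
  rw [show γ - (γ + α - t) = t - α by abel, show γ + α - t = γ - (t - α) by abel]
  linear_combination A t γ * hB α β t - B t γ * hA α β t + B α (t - β) * hAβ
    - A α (t - β) * hBβ + B β (t - α) * hAα - A β (t - α) * hBα

variable [TopologicalSpace R] [IsTopologicalRing R] [T2Space R] [IsAddTorsionFree R]

lemma commutator {A B : G → G → R} (hA : IsLeibnizKernel A) (hB : IsLeibnizKernel B)
    (hAB : ∀ μ ν, Summable fun t => A t ν * B μ t)
    (hBA : ∀ μ ν, Summable fun t => B t ν * A μ t) :
    IsLeibnizKernel fun μ ν => ∑' t, A t ν * B μ t - ∑' t, B t ν * A μ t := by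
  intro α β γ
  simp only [← (hAB _ _).tsum_sub (hBA _ _)]
  set F : G → G → G → R := fun μ ν t => A t ν * B μ t - B t ν * A μ t
  set C : G → R := fun s => A β (γ - s) * B α s - B β (γ - s) * A α s
  have hF : ∀ μ ν, Summable (F μ ν) := fun μ ν => (hAB μ ν).sub (hBA μ ν)
  have hsplit (t : G) : F (α + β) γ t =
      F α (γ - β) (t - β) + F β (γ - α) (t - α) + (C (t - β) - C (γ + α - t)) :=
    commutator_summand_add hA hB α β γ t
  change ∑' t, F (α + β) γ t = ∑' t, F α (γ - β) t + ∑' t, F β (γ - α) t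
  clear_value F C
  have hFβ : Summable fun t => F α (γ - β) (t - β) :=
    (Equiv.subRight β).summable_iff.mpr (hF α (γ - β))
  have hFα : Summable fun t => F β (γ - α) (t - α) :=
    (Equiv.subRight α).summable_iff.mpr (hF β (γ - α))
  have hcross : Summable fun t => C (t - β) - C (γ + α - t) :=
    ((hF (α + β) γ).sub (hFβ.add hFα)).congr fun t => by rw [hsplit]; abel
  have hcross_zero : ∑' t, (C (t - β) - C (γ + α - t)) = 0 := by
    refine tsum_eq_zero_of_apply_sub_eq_neg (γ + α + β) fun t => ?_
    rw [show γ + α + β - t - β = γ + α - t by abel, show γ + α - (γ + α + β - t) = t - β by abel,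
      neg_sub]
  rw [tsum_congr hsplit, (hFβ.add hFα).tsum_add hcross, hFβ.tsum_add hFα, hcross_zero, add_zero]
  exact congr_arg₂ (· + ·) ((Equiv.subRight β).tsum_eq _) ((Equiv.subRight α).tsum_eq _)

end IsLeibnizKernel

lemma isLeibnizKernel_hfun {n k : ℕ} (f : Fin n → (Fin n → ℤ) → Fin k → (Fin k → ℝ) → ℝ)
    (u : Fin k) (x : Fin k → ℝ) : IsLeibnizKernel fun α β => hfun f α β u x := by
  intro α β γ
  simp only [hfun, ← Finset.sum_add_distrib, Pi.add_apply, Int.cast_add, add_mul]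
  refine Finset.sum_congr rfl fun s _ => ?_
  rw [show γ - β - α = γ - (α + β) by abel, show γ - α - β = γ - (α + β) by abel]

theorem stmt_11_general (n k : ℕ)
    (f : Fin n → (Fin n → ℤ) → Fin k → (Fin k → ℝ) → ℝ)
    (x : Fin k → ℝ)
    (α β γ : Fin n → ℤ) (u v : Fin k)
    (hdiff : ∀ (μ ν : Fin n → ℤ) (u' : Fin k), DifferentiableAt ℝ (hfun f μ ν u') x)
    (hsum : ∀ (μ ν : Fin n → ℤ) (u' v' : Fin k),
      Summable (fun δ : Fin n → ℤ => hfun f δ ν v' x * hfun f μ δ u' x)) :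
    Rfun f (α + β) γ u v x = Rfun f α (γ - β) u v x + Rfun f β (γ - α) u v x := by
  have hderiv (w w' : Fin k) :
      IsLeibnizKernel fun μ ν => fderiv ℝ (hfun f μ ν w) x (Pi.single w' 1) :=
    IsLeibnizKernel.fderiv_apply (fun y => isLeibnizKernel_hfun f w y) (fun μ ν => hdiff μ ν w) _
  have hcomm := IsLeibnizKernel.commutator (isLeibnizKernel_hfun f v x) (isLeibnizKernel_hfun f u x)
    (fun μ ν => hsum μ ν u v) (fun μ ν => hsum μ ν v u)
  have hR : IsLeibnizKernel fun μ ν => Rfun f μ ν u v x := by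
    simpa only [Rfun, add_sub_assoc] using ((hderiv v u).sub (hderiv u v)).add hcomm
  exact hR α β γ

/-- If each `h_{μνu'}` is differentiable at `x` and all the families defining the `R`'s at `x`
are summable, then `R_{(α+β)γuv}(x) = R_{α(γ−β)uv}(x) + R_{β(γ−α)uv}(x)`. -/
theorem stmt_11 (n k : ℕ) (hn : 1 ≤ n) (hk : 1 ≤ k)
    (U : Set (Fin k → ℝ)) (hUopen : IsOpen U) (hU0 : (0 : Fin k → ℝ) ∈ U)
    (f : Fin n → (Fin n → ℤ) → Fin k → (Fin k → ℝ) → ℝ)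
    (hf : ∀ r α u, AnalyticOnNhd ℝ (f r α u) U)
    (x : Fin k → ℝ) (hx : x ∈ U)
    (α β γ : Fin n → ℤ) (u v : Fin k)
    (hdiff : ∀ (μ ν : Fin n → ℤ) (u' : Fin k), DifferentiableAt ℝ (hfun f μ ν u') x)
    (hsum : ∀ (μ ν : Fin n → ℤ) (u' v' : Fin k),
      Summable (fun δ : Fin n → ℤ => hfun f δ ν v' x * hfun f μ δ u' x)) :
    Rfun f (α + β) γ u v x = Rfun f α (γ - β) u v x + Rfun f β (γ - α) u v x :=
  stmt_11_general n k f x α β γ u v hdiff hsum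
end

section
/- Fix x ∈ U, multi-indices α, β ∈ ℤ^n and 1 ≤ u, v ≤ k. Assume that each h_{αβu} is differentiable at x and that for every pair of multi-indices μ, ν ∈ ℤ^n and every pair of indices 1 ≤ u', v' ≤ k the family (δ ∈ ℤ^n ↦ h_{δνv'}(x) · h_{μδu'}(x)) is summable, so that R_{μνu'v'}(x) is defined, and that the family (s ↦ α_s R_{e_s,(β−α+e_s),uv}(x)) makes sense as a finite sum. Then R_{αβuv}(x) = Σ_{s=1}^n α_s · R_{e_s,(β−α+e_s),uv}(x). -/
lemma hfun_single {n k : ℕ} (f : Fin n → (Fin n → ℤ) → Fin k → (Fin k → ℝ) → ℝ)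
    (s : Fin n) (δ : Fin n → ℤ) (u : Fin k) (x : Fin k → ℝ) :
    hfun f (Pi.single s 1) δ u x = f s δ u x := by
  have harg : δ - Pi.single s 1 + Pi.single s 1 = δ := by abel
  simp only [hfun]
  rw [Finset.sum_eq_single s]
  · rw [harg]; simp
  · intro r _ hrs
    simp [Pi.single_eq_of_ne hrs]
  · intro h; exact absurd (Finset.mem_univ s) h

lemma hfun_shift {n k : ℕ} (f : Fin n → (Fin n → ℤ) → Fin k → (Fin k → ℝ) → ℝ)
    (t c β : Fin n → ℤ) (w : Fin k) (x : Fin k → ℝ) :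
    hfun f (t + c) β w x
      = hfun f t (β - c) w x + ∑ ρ, (c ρ : ℝ) * f ρ (β - c - t + Pi.single ρ 1) w x := by
  simp only [hfun]
  rw [← Finset.sum_add_distrib]
  refine Finset.sum_congr rfl fun ρ _ => ?_
  have h1 : β - (t + c) + Pi.single ρ 1 = β - c - t + Pi.single ρ 1 := by abel
  rw [h1, Pi.add_apply]
  push_cast
  ring

/-- `W` : the "good" summable part. -/
noncomputable def Wfun {n k : ℕ} (f : Fin n → (Fin n → ℤ) → Fin k → (Fin k → ℝ) → ℝ)
    (x : Fin k → ℝ) (α β : Fin n → ℤ) (u v : Fin k) (s : Fin n) (t : Fin n → ℤ) : ℝ :=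
  hfun f t (β - α + Pi.single s 1) v x * hfun f (Pi.single s 1) t u x
    - hfun f t (β - α + Pi.single s 1) u x * hfun f (Pi.single s 1) t v x

/-- `V` : the remainder part, which sums to zero by antisymmetry. -/
noncomputable def Vfun {n k : ℕ} (f : Fin n → (Fin n → ℤ) → Fin k → (Fin k → ℝ) → ℝ)
    (x : Fin k → ℝ) (α β : Fin n → ℤ) (u v : Fin k) (s : Fin n) (t : Fin n → ℤ) : ℝ :=
  (∑ ρ, (((α - Pi.single s 1 : Fin n → ℤ)) ρ : ℝ) *
      f ρ (β - α + Pi.single s 1 - t + Pi.single ρ 1) v x) * f s t u x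
    - (∑ ρ, (((α - Pi.single s 1 : Fin n → ℤ)) ρ : ℝ) *
      f ρ (β - α + Pi.single s 1 - t + Pi.single ρ 1) u x) * f s t v x

lemma decomp {n k : ℕ} (f : Fin n → (Fin n → ℤ) → Fin k → (Fin k → ℝ) → ℝ)
    (x : Fin k → ℝ) (α β : Fin n → ℤ) (u v : Fin k) (t : Fin n → ℤ) :
    hfun f t β v x * hfun f α t u x - hfun f t β u x * hfun f α t v x
      = ∑ s, ((α s : ℝ) * Wfun f x α β u v s (t - (α - Pi.single s 1))
          + (α s : ℝ) * Vfun f x α β u v s (t - (α - Pi.single s 1))) := by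
  have h1 : ∀ w' : Fin k,
      hfun f α t w' x = ∑ s, (α s : ℝ) * f s (t - (α - Pi.single s 1)) w' x := by
    intro w'
    simp only [hfun]
    refine Finset.sum_congr rfl fun s _ => ?_
    have hc : t - α + Pi.single s 1 = t - (α - Pi.single s 1) := by abel
    rw [hc]
  have h2 : ∀ (s : Fin n) (w' : Fin k),
      hfun f t β w' x
        = hfun f (t - (α - Pi.single s 1)) (β - α + Pi.single s 1) w' x
          + ∑ ρ, (((α - Pi.single s 1 : Fin n → ℤ)) ρ : ℝ) *
              f ρ (β - α + Pi.single s 1 - (t - (α - Pi.single s 1)) + Pi.single ρ 1) w' x := by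
    intro s w'
    have h3 := hfun_shift f (t - (α - Pi.single s 1)) (α - Pi.single s 1) β w' x
    have h4 : t - (α - Pi.single s 1) + (α - Pi.single s 1) = t := by abel
    have h5 : β - (α - Pi.single s 1) = β - α + Pi.single s 1 := by abel
    rw [h4, h5] at h3
    exact h3
  rw [h1 u, h1 v, Finset.mul_sum, Finset.mul_sum, ← Finset.sum_sub_distrib]
  refine Finset.sum_congr rfl fun s _ => ?_
  rw [h2 s v, h2 s u]
  simp only [Wfun, Vfun, hfun_single]
  ring

lemma anti_aux {n : ℕ} (a : Fin n → Fin n → ℝ) (ha : ∀ s ρ, a s ρ = a ρ s)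
    (A B C D : Fin n → ℝ) :
    ∑ s, ((∑ ρ, a s ρ * D ρ) * B s - (∑ ρ, a s ρ * C ρ) * A s)
      = - ∑ s, ((∑ ρ, a s ρ * A ρ) * C s - (∑ ρ, a s ρ * B ρ) * D s) := by
  have key : ∀ (E : Fin n → Fin n → ℝ), (∀ s ρ, E s ρ = - E ρ s) →
      ∑ s, ∑ ρ, a s ρ * E s ρ = 0 := by
    intro E hE
    have h1 : ∑ s, ∑ ρ, a s ρ * E s ρ = ∑ ρ, ∑ s, a s ρ * E s ρ := Finset.sum_comm
    have h3 : ∑ ρ, ∑ s, a s ρ * E s ρ = - ∑ s, ∑ ρ, a s ρ * E s ρ := by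
      calc ∑ ρ, ∑ s, a s ρ * E s ρ
          = ∑ s, ∑ ρ, -(a s ρ * E s ρ) := by
            refine Finset.sum_congr rfl fun ρ _ => Finset.sum_congr rfl fun s _ => ?_
            rw [ha s ρ, hE s ρ]; ring
        _ = - ∑ s, ∑ ρ, a s ρ * E s ρ := by
            simp [Finset.sum_neg_distrib]
    have := h1.trans h3
    linarith
  have e1 : ∑ s, ((∑ ρ, a s ρ * D ρ) * B s - (∑ ρ, a s ρ * C ρ) * A s)
      = ∑ s, ∑ ρ, a s ρ * (D ρ * B s - C ρ * A s) := by
    refine Finset.sum_congr rfl fun s _ => ?_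
    rw [Finset.sum_mul, Finset.sum_mul, ← Finset.sum_sub_distrib]
    exact Finset.sum_congr rfl fun ρ _ => by ring
  have e2 : ∑ s, ((∑ ρ, a s ρ * A ρ) * C s - (∑ ρ, a s ρ * B ρ) * D s)
      = ∑ s, ∑ ρ, a s ρ * (A ρ * C s - B ρ * D s) := by
    refine Finset.sum_congr rfl fun s _ => ?_
    rw [Finset.sum_mul, Finset.sum_mul, ← Finset.sum_sub_distrib]
    exact Finset.sum_congr rfl fun ρ _ => by ring
  have hkey := key (fun s ρ => (D ρ * B s - C ρ * A s) + (A ρ * C s - B ρ * D s))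
    (fun s ρ => by ring)
  have hsplit : ∑ s, ∑ ρ, a s ρ * ((D ρ * B s - C ρ * A s) + (A ρ * C s - B ρ * D s))
      = (∑ s, ∑ ρ, a s ρ * (D ρ * B s - C ρ * A s))
        + ∑ s, ∑ ρ, a s ρ * (A ρ * C s - B ρ * D s) := by
    rw [← Finset.sum_add_distrib]
    refine Finset.sum_congr rfl fun s _ => ?_
    rw [← Finset.sum_add_distrib]
    exact Finset.sum_congr rfl fun ρ _ => by ring
  rw [e1, e2]
  rw [hsplit] at hkey
  linarith

lemma quad_lemma {n k : ℕ} (f : Fin n → (Fin n → ℤ) → Fin k → (Fin k → ℝ) → ℝ)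
    (x : Fin k → ℝ) (α β : Fin n → ℤ) (u v : Fin k)
    (hsum : ∀ (μ ν : Fin n → ℤ) (u' v' : Fin k),
      Summable (fun δ : Fin n → ℤ => hfun f δ ν v' x * hfun f μ δ u' x)) :
    (∑' t : Fin n → ℤ, hfun f t β v x * hfun f α t u x)
      - (∑' t : Fin n → ℤ, hfun f t β u x * hfun f α t v x)
    = ∑ s, (α s : ℝ) *
        ((∑' t : Fin n → ℤ, hfun f t (β - α + Pi.single s 1) v x
            * hfun f (Pi.single s 1) t u x)
          - (∑' t : Fin n → ℤ, hfun f t (β - α + Pi.single s 1) u x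
            * hfun f (Pi.single s 1) t v x)) := by
  -- summability facts
  have hWsum : ∀ s, Summable (Wfun f x α β u v s) := by
    intro s
    show Summable (fun t => hfun f t (β - α + Pi.single s 1) v x * hfun f (Pi.single s 1) t u x
      - hfun f t (β - α + Pi.single s 1) u x * hfun f (Pi.single s 1) t v x)
    exact (hsum (Pi.single s 1) (β - α + Pi.single s 1) u v).sub
      (hsum (Pi.single s 1) (β - α + Pi.single s 1) v u)
  have hWshift : ∀ s, Summable (fun t => Wfun f x α β u v s (t - (α - Pi.single s 1))) :=
    fun s => (hWsum s).comp_injective sub_left_injective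
  have hGsum : Summable (fun t : Fin n → ℤ =>
      hfun f t β v x * hfun f α t u x - hfun f t β u x * hfun f α t v x) :=
    (hsum α β u v).sub (hsum α β v u)
  have hWpart : Summable (fun t : Fin n → ℤ =>
      ∑ s, (α s : ℝ) * Wfun f x α β u v s (t - (α - Pi.single s 1))) :=
    summable_sum fun s _ => (hWshift s).mul_left _
  have hMeq : (fun t : Fin n → ℤ =>
        ∑ s, (α s : ℝ) * Vfun f x α β u v s (t - (α - Pi.single s 1)))
      = fun t => (hfun f t β v x * hfun f α t u x - hfun f t β u x * hfun f α t v x)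
          - ∑ s, (α s : ℝ) * Wfun f x α β u v s (t - (α - Pi.single s 1)) := by
    funext t
    have hd := decomp f x α β u v t
    rw [Finset.sum_add_distrib] at hd
    linarith
  have hMsum : Summable (fun t : Fin n → ℤ =>
      ∑ s, (α s : ℝ) * Vfun f x α β u v s (t - (α - Pi.single s 1))) := by
    rw [hMeq]
    exact hGsum.sub hWpart
  -- coefficient symmetry
  set a : Fin n → Fin n → ℝ :=
    fun s ρ => (α s : ℝ) * (((α - Pi.single s 1 : Fin n → ℤ)) ρ : ℝ) with ha_def
  have ha : ∀ s ρ, a s ρ = a ρ s := by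
    intro s ρ
    rcases eq_or_ne s ρ with rfl | h
    · rfl
    · simp only [ha_def, Pi.sub_apply]
      rw [Pi.single_eq_of_ne (Ne.symm h), Pi.single_eq_of_ne h]
      push_cast
      ring
  have hVpull : ∀ (s : Fin n) (t : Fin n → ℤ), (α s : ℝ) * Vfun f x α β u v s t
      = (∑ ρ, a s ρ * f ρ (β - α + Pi.single s 1 - t + Pi.single ρ 1) v x) * f s t u x
        - (∑ ρ, a s ρ * f ρ (β - α + Pi.single s 1 - t + Pi.single ρ 1) u x) * f s t v x := by
    intro s t
    have hpull : ∀ g : Fin n → ℝ,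
        (α s : ℝ) * (∑ ρ, (((α - Pi.single s 1 : Fin n → ℤ)) ρ : ℝ) * g ρ)
          = ∑ ρ, a s ρ * g ρ := by
      intro g
      rw [Finset.mul_sum]
      exact Finset.sum_congr rfl fun ρ _ => (mul_assoc _ _ _).symm
    simp only [Vfun]
    rw [← hpull, ← hpull]
    ring
  -- antisymmetry : the `V`-part has zero tsum
  have hanti : ∀ w : Fin n → ℤ,
      (∑ s, (α s : ℝ) * Vfun f x α β u v s (β - α - w + Pi.single s 1))
        = - ∑ s, (α s : ℝ) * Vfun f x α β u v s (w + Pi.single s 1) := by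
    intro w
    have harg1 : ∀ s ρ : Fin n,
        β - α + Pi.single s 1 - (β - α - w + Pi.single s 1) + Pi.single ρ 1
          = w + Pi.single ρ 1 := fun s ρ => by abel
    have harg2 : ∀ s ρ : Fin n,
        β - α + Pi.single s 1 - (w + Pi.single s 1) + Pi.single ρ 1
          = β - α - w + Pi.single ρ 1 := fun s ρ => by abel
    have lhs_eq : (∑ s, (α s : ℝ) * Vfun f x α β u v s (β - α - w + Pi.single s 1))
        = ∑ s, ((∑ ρ, a s ρ * f ρ (w + Pi.single ρ 1) v x)
              * f s (β - α - w + Pi.single s 1) u x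
            - (∑ ρ, a s ρ * f ρ (w + Pi.single ρ 1) u x)
              * f s (β - α - w + Pi.single s 1) v x) := by
      refine Finset.sum_congr rfl fun s _ => ?_
      rw [hVpull]
      simp only [harg1]
    have rhs_eq : (∑ s, (α s : ℝ) * Vfun f x α β u v s (w + Pi.single s 1))
        = ∑ s, ((∑ ρ, a s ρ * f ρ (β - α - w + Pi.single ρ 1) v x)
              * f s (w + Pi.single s 1) u x
            - (∑ ρ, a s ρ * f ρ (β - α - w + Pi.single ρ 1) u x)
              * f s (w + Pi.single s 1) v x) := by
      refine Finset.sum_congr rfl fun s _ => ?_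
      rw [hVpull]
      simp only [harg2]
    rw [lhs_eq, rhs_eq]
    exact anti_aux a ha
      (fun ρ => f ρ (β - α - w + Pi.single ρ 1) v x)
      (fun ρ => f ρ (β - α - w + Pi.single ρ 1) u x)
      (fun ρ => f ρ (w + Pi.single ρ 1) u x)
      (fun ρ => f ρ (w + Pi.single ρ 1) v x)
  -- tsum of the V-part is zero
  have hMtsum : (∑' t : Fin n → ℤ,
      ∑ s, (α s : ℝ) * Vfun f x α β u v s (t - (α - Pi.single s 1))) = 0 := by
    set M : (Fin n → ℤ) → ℝ :=
      fun t => ∑ s, (α s : ℝ) * Vfun f x α β u v s (t - (α - Pi.single s 1)) with hM_def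
    have hshift : ∀ w : Fin n → ℤ, M (w + α)
        = ∑ s, (α s : ℝ) * Vfun f x α β u v s (w + Pi.single s 1) := by
      intro w
      simp only [hM_def]
      refine Finset.sum_congr rfl fun s _ => ?_
      have : w + α - (α - Pi.single s 1) = w + Pi.single s 1 := by abel
      rw [this]
    have h1 : (∑' t, M t) = ∑' w, M (w + α) := ((Equiv.addRight α).tsum_eq M).symm
    have h2 : (∑' w, M (w + α)) = ∑' w, M ((β - α - w) + α) := by
      exact ((Equiv.subLeft (β - α)).tsum_eq (fun w => M (w + α))).symm
    have h3 : (∑' w, M ((β - α - w) + α)) = ∑' w, - M (w + α) := by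
      refine tsum_congr fun w => ?_
      rw [hshift, hshift]
      exact hanti w
    have h4 : (∑' w : Fin n → ℤ, - M (w + α)) = - ∑' w, M (w + α) := tsum_neg
    have : (∑' w, M (w + α)) = 0 := by
      have := h2.trans (h3.trans h4)
      linarith
    rw [h1, this]
  -- put everything together
  rw [← Summable.tsum_sub (hsum α β u v) (hsum α β v u)]
  have hsplit : (∑' t : Fin n → ℤ,
        (hfun f t β v x * hfun f α t u x - hfun f t β u x * hfun f α t v x))
      = (∑' t : Fin n → ℤ, ∑ s, (α s : ℝ) * Wfun f x α β u v s (t - (α - Pi.single s 1)))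
        + ∑' t : Fin n → ℤ, ∑ s, (α s : ℝ) * Vfun f x α β u v s (t - (α - Pi.single s 1)) := by
    rw [← Summable.tsum_add hWpart hMsum]
    refine tsum_congr fun t => ?_
    have hd := decomp f x α β u v t
    rw [Finset.sum_add_distrib] at hd
    linarith
  rw [hsplit, hMtsum, add_zero,
    Summable.tsum_finsetSum (fun s _ => (hWshift s).mul_left ((α s : ℝ)))]
  refine Finset.sum_congr rfl fun s _ => ?_
  rw [tsum_mul_left]
  congr 1
  have hw : (∑' t, Wfun f x α β u v s (t - (α - Pi.single s 1)))
      = ∑' t, Wfun f x α β u v s t := (Equiv.subRight (α - Pi.single s 1)).tsum_eq _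
  rw [hw]
  show (∑' t, (hfun f t (β - α + Pi.single s 1) v x * hfun f (Pi.single s 1) t u x
      - hfun f t (β - α + Pi.single s 1) u x * hfun f (Pi.single s 1) t v x)) = _
  rw [Summable.tsum_sub (hsum (Pi.single s 1) (β - α + Pi.single s 1) u v)
    (hsum (Pi.single s 1) (β - α + Pi.single s 1) v u)]

/-- If each `h_{μνu'}` is differentiable at `x` and all the families defining the `R`'s at `x`
are summable, then `R_{αβuv}(x) = ∑_{s=1}^n α_s · R_{e_s,(β−α+e_s),uv}(x)`. -/
theorem stmt_12 (n k : ℕ) (hn : 1 ≤ n) (hk : 1 ≤ k)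
    (U : Set (Fin k → ℝ)) (hUopen : IsOpen U) (hU0 : (0 : Fin k → ℝ) ∈ U)
    (f : Fin n → (Fin n → ℤ) → Fin k → (Fin k → ℝ) → ℝ)
    (hf : ∀ r α u, AnalyticOnNhd ℝ (f r α u) U)
    (x : Fin k → ℝ) (hx : x ∈ U)
    (α β : Fin n → ℤ) (u v : Fin k)
    (hdiff : ∀ (μ ν : Fin n → ℤ) (u' : Fin k), DifferentiableAt ℝ (hfun f μ ν u') x)
    (hsum : ∀ (μ ν : Fin n → ℤ) (u' v' : Fin k),
      Summable (fun δ : Fin n → ℤ => hfun f δ ν v' x * hfun f μ δ u' x)) :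
    Rfun f α β u v x
      = ∑ s, (α s : ℝ) * Rfun f (Pi.single s 1) (β - α + Pi.single s 1) u v x := by
  have hDer : ∀ (w w' : Fin k),
      fderiv ℝ (hfun f α β w) x (Pi.single w' 1)
        = ∑ s, (α s : ℝ) *
            fderiv ℝ (hfun f (Pi.single s 1) (β - α + Pi.single s 1) w) x (Pi.single w' 1) := by
    intro w w'
    have heq : hfun f α β w
        = fun y => ∑ s, (α s : ℝ) * hfun f (Pi.single s 1) (β - α + Pi.single s 1) w y := by
      funext y
      simp only [hfun_single]
      simp only [hfun]
    have hF := fderiv_fun_sum (𝕜 := ℝ) (x := x) (u := Finset.univ)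
      (A := fun s y => (α s : ℝ) * hfun f (Pi.single s 1) (β - α + Pi.single s 1) w y)
      (fun s _ => (hdiff (Pi.single s 1) (β - α + Pi.single s 1) w).const_mul _)
    rw [heq, hF, ContinuousLinearMap.sum_apply]
    refine Finset.sum_congr rfl fun s _ => ?_
    rw [fderiv_const_mul (hdiff (Pi.single s 1) (β - α + Pi.single s 1) w)]
    rw [ContinuousLinearMap.smul_apply, smul_eq_mul]
  have hq := quad_lemma f x α β u v hsum
  simp only [Rfun]
  rw [hDer v u, hDer u v]
  have hre : ∀ (p q r t : ℝ), p - q + r - t = (p - q) + (r - t) := fun _ _ _ _ => by ring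
  rw [hre, hq, ← Finset.sum_sub_distrib, ← Finset.sum_add_distrib]
  refine Finset.sum_congr rfl fun s _ => ?_
  ring
end

section
/- Fix x ∈ U and suppose that for every 1 ≤ r ≤ n, 1 ≤ u ≤ k and every z = (z_1,…,z_n) ∈ W (where W ⊆ (ℝ∖{0})^n is a nonempty open set) the family (α ∈ ℤ^n ↦ f_{rαu}(x) · z_1^{α_1}⋯z_n^{α_n}) is absolutely summable. Then for all multi-indices α, γ ∈ ℤ^n and all 1 ≤ u, v ≤ k, the family (t ∈ ℤ^n ↦ h_{tγv}(x) · h_{αtu}(x)) is summable. -/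
private lemma abs_int_le_aux (t : ℝ) (ht : 1 < t) (m : ℤ) :
    (|m| : ℝ) ≤ (t - 1)⁻¹ * (t ^ m + t ^ (-m)) := by
  have ht0 : (0:ℝ) < t := by linarith
  have key : ∀ m : ℤ, 0 ≤ m → (|m| : ℝ) ≤ (t - 1)⁻¹ * (t ^ m + t ^ (-m)) := by
    intro m hm
    lift m to ℕ using hm
    have h1 : 1 + (m:ℝ) * (t - 1) ≤ t ^ (m:ℕ) := by
      simpa using one_add_mul_le_pow (a := t - 1) (by linarith) m
    have h2 : (0:ℝ) < t ^ (-(m:ℤ)) := zpow_pos ht0 _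
    have h3 : (t:ℝ) ^ ((m:ℤ)) = t ^ (m:ℕ) := zpow_natCast t m
    rw [le_inv_mul_iff₀ (by linarith)]
    push_cast
    rw [abs_of_nonneg (by positivity : (0:ℝ) ≤ (m:ℝ))]
    nlinarith
  rcases le_or_gt 0 m with hm | hm
  · exact key m hm
  · have := key (-m) (by linarith)
    simpa [abs_neg, add_comm] using this

private lemma keyA {n : ℕ} {W : Set (Fin n → ℝ)} (hWopen : IsOpen W)
    (g : (Fin n → ℤ) → ℝ)
    (hsum : ∀ z ∈ W, Summable (fun β : Fin n → ℤ => |g β * ∏ i, z i ^ β i|))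
    (s : Fin n) {z : Fin n → ℝ} (hz : z ∈ W) :
    Summable (fun β : Fin n → ℤ => |(β s : ℝ)| * |g β * ∏ i, z i ^ β i|) := by
  set G : ℝ → (Fin n → ℝ) := fun t i => if i = s then z i * t else z i with hG
  have hGcont : Continuous G := by
    apply continuous_pi
    intro i
    by_cases h : i = s <;> simp only [hG, h, if_pos, if_neg, ite_true, ite_false] <;> fun_prop
  have hG1 : G 1 = z := by
    funext i; by_cases h : i = s <;> simp [hG, h]
  have hS : IsOpen (G ⁻¹' W) := hWopen.preimage hGcont
  have h1S : (1:ℝ) ∈ G ⁻¹' W := by simp [Set.mem_preimage, hG1, hz]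
  obtain ⟨ε, hε, hball⟩ := Metric.isOpen_iff.mp hS 1 h1S
  set t : ℝ := 1 + ε / 2 with htdef
  have ht1 : 1 < t := by simp [htdef]; linarith
  have ht0 : (0:ℝ) < t := by linarith
  have hGt : G t ∈ W := by
    apply hball
    simp [Metric.mem_ball, Real.dist_eq, htdef]
    rw [abs_of_nonneg (by linarith)]; linarith
  have hGt' : G t⁻¹ ∈ W := by
    apply hball
    have hti : 0 < t⁻¹ := by positivity
    have htt : t⁻¹ * t = 1 := inv_mul_cancel₀ (by linarith)
    simp [Metric.mem_ball, Real.dist_eq]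
    rw [abs_of_nonpos (by nlinarith)]
    nlinarith
  have hprod : ∀ (r : ℝ) (β : Fin n → ℤ),
      ∏ i, (G r) i ^ β i = (∏ i, z i ^ β i) * r ^ β s := by
    intro r β
    have : ∀ i, (G r i) ^ β i = z i ^ β i * (if i = s then r ^ β i else 1) := by
      intro i; simp only [hG]; split <;> simp [mul_zpow]
    simp only [this, Finset.prod_mul_distrib,
      Finset.prod_ite_eq' Finset.univ s (fun i => r ^ β i)]
    simp
  have hplus := hsum (G t) hGt
  have hminus := hsum (G t⁻¹) hGt'
  refine Summable.of_nonneg_of_le (fun β => by positivity) (fun β => ?_)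
    (((hplus.add hminus).mul_left ((t - 1)⁻¹)))
  have e1 : |g β * ∏ i, (G t) i ^ β i| = |g β * ∏ i, z i ^ β i| * t ^ β s := by
    rw [hprod, ← mul_assoc, abs_mul, abs_of_pos (zpow_pos ht0 _)]
  have e2 : |g β * ∏ i, (G t⁻¹) i ^ β i| = |g β * ∏ i, z i ^ β i| * t ^ (-β s) := by
    rw [hprod, ← mul_assoc, abs_mul, abs_of_pos (zpow_pos (inv_pos.mpr ht0) _),
      inv_zpow, ← zpow_neg]
  rw [e1, e2]
  have h3 := abs_int_le_aux t ht1 (β s)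
  have h4 : (0:ℝ) ≤ |g β * ∏ i, z i ^ β i| := abs_nonneg _
  calc |(β s : ℝ)| * |g β * ∏ i, z i ^ β i|
      ≤ ((t - 1)⁻¹ * (t ^ β s + t ^ (-β s))) * |g β * ∏ i, z i ^ β i| := by
        apply mul_le_mul_of_nonneg_right _ h4
        exact_mod_cast h3
    _ = (t - 1)⁻¹ * (|g β * ∏ i, z i ^ β i| * t ^ β s
          + |g β * ∏ i, z i ^ β i| * t ^ (-β s)) := by ring


/-- Fix `x ∈ U` and suppose for every `r, u` and every `z` in a nonempty open set
`W ⊆ (ℝ∖{0})ⁿ` the family `α ↦ f_{rαu}(x) z^α` is absolutely summable. Then for all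
multi-indices `α, γ` and all `u, v`, the family `t ↦ h_{tγv}(x) · h_{αtu}(x)` is summable. -/
theorem stmt_13 (n k : ℕ) (hn : 1 ≤ n) (hk : 1 ≤ k)
    (U : Set (Fin k → ℝ)) (hUopen : IsOpen U) (hU0 : (0 : Fin k → ℝ) ∈ U)
    (f : Fin n → (Fin n → ℤ) → Fin k → (Fin k → ℝ) → ℝ)
    (hf : ∀ r α u, AnalyticOnNhd ℝ (f r α u) U)
    (W : Set (Fin n → ℝ)) (hWne : W.Nonempty) (hWopen : IsOpen W)
    (hW0 : ∀ z ∈ W, ∀ i, z i ≠ 0)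
    (x : Fin k → ℝ) (hx : x ∈ U)
    (hsum : ∀ (r : Fin n) (u : Fin k), ∀ z ∈ W,
      Summable (fun α : Fin n → ℤ => |f r α u x * ∏ i, z i ^ α i|)) :
    ∀ (α γ : Fin n → ℤ) (u v : Fin k),
      Summable (fun t : Fin n → ℤ => hfun f t γ v x * hfun f α t u x) := by
  intro α γ u v
  obtain ⟨z, hz⟩ := hWne
  have hz0 := hW0 z hz
  have hexp : (fun t : Fin n → ℤ => hfun f t γ v x * hfun f α t u x)
      = fun t => ∑ s, ∑ s', ((t s : ℝ) * f s (γ - t + Pi.single s 1) v x)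
          * ((α s' : ℝ) * f s' (t - α + Pi.single s' 1) u x) := by
    funext t
    rw [hfun, hfun, Finset.sum_mul_sum]
  rw [hexp]
  apply summable_sum
  intro s _
  apply summable_sum
  intro s' _
  -- notation
  set c : Fin n → ℤ := γ + Pi.single s 1 with hcdef
  have hc : ∀ t : Fin n → ℤ, γ - t + Pi.single s 1 = c - t := by
    intro t; funext i
    simp only [hcdef, Pi.sub_apply, Pi.add_apply]; ring
  set a : (Fin n → ℤ) → ℝ := fun β => |f s β v x * ∏ i, z i ^ β i| with hadef
  have ha : Summable a := hsum s v z hz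
  have haw : Summable (fun β : Fin n → ℤ => |(β s : ℝ)| * a β) :=
    keyA hWopen (fun β => f s β v x) (fun w hw => hsum s v w hw) s hz
  have hb := hsum s' u z hz
  set M : ℝ := ∑' β : Fin n → ℤ, |f s' β u x * ∏ i, z i ^ β i| with hMdef
  have hM : ∀ β, |f s' β u x * ∏ i, z i ^ β i| ≤ M :=
    fun β => Summable.le_tsum hb β (fun _ _ => abs_nonneg _)
  set K : ℝ := |∏ i, z i ^ ((γ - α + Pi.single s 1 + Pi.single s' 1 : Fin n → ℤ) i)| with hKdef
  have hK : 0 < K := by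
    rw [hKdef, abs_pos]
    exact Finset.prod_ne_zero_iff.mpr fun i _ => zpow_ne_zero _ (hz0 i)
  have hzK : ∀ t : Fin n → ℤ,
      (∏ i, z i ^ ((c - t) i)) * (∏ i, z i ^ ((t - α + Pi.single s' 1 : Fin n → ℤ) i))
        = ∏ i, z i ^ ((γ - α + Pi.single s 1 + Pi.single s' 1 : Fin n → ℤ) i) := by
    intro t
    rw [← Finset.prod_mul_distrib]
    refine Finset.prod_congr rfl fun i _ => ?_
    rw [← zpow_add₀ (hz0 i)]
    congr 1
    simp only [hcdef, Pi.sub_apply, Pi.add_apply]; ring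
  -- the summable bound
  have hβ : Summable (fun β : Fin n → ℤ => (|(β s : ℝ)| + |(c s : ℝ)|) * a β) := by
    refine (haw.add (ha.mul_left |(c s : ℝ)|)).congr fun β => ?_
    ring
  have hS : Summable (fun t : Fin n → ℤ => (|((c - t) s : ℝ)| + |(c s : ℝ)|) * a (c - t)) :=
    (Equiv.subLeft c).summable_iff.mpr hβ
  set C : ℝ := |(α s' : ℝ)| * (M / K) with hCdef
  have habs : Summable (fun t : Fin n → ℤ =>
      |((t s : ℝ) * f s (c - t) v x) * ((α s' : ℝ) * f s' (t - α + Pi.single s' 1) u x)|) := by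
    refine Summable.of_nonneg_of_le (fun t => abs_nonneg _) (fun t => ?_) (hS.mul_left C)
    set P : ℝ := |∏ i, z i ^ ((c - t) i)| with hPdef
    have hP : 0 ≤ P := abs_nonneg _
    have h1 : |(t s : ℝ)| ≤ |((c - t) s : ℝ)| + |(c s : ℝ)| := by
      have e : (t s : ℝ) = (c s : ℝ) - ((c - t) s : ℝ) := by
        push_cast [Pi.sub_apply]; ring
      rw [e, sub_eq_add_neg]
      refine (abs_add_le _ _).trans ?_
      rw [abs_neg]; linarith
    have h2 : |f s' (t - α + Pi.single s' 1) u x| ≤ M * P / K := by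
      rw [le_div_iff₀ hK]
      have := hM (t - α + Pi.single s' 1)
      rw [abs_mul] at this
      have h4 := mul_le_mul_of_nonneg_left this hP
      calc |f s' (t - α + Pi.single s' 1) u x| * K
          = P * (|f s' (t - α + Pi.single s' 1) u x|
              * |∏ i, z i ^ ((t - α + Pi.single s' 1 : Fin n → ℤ) i)|) := by
            rw [hKdef, hPdef, ← hzK t, abs_mul]; ring
        _ ≤ P * M := by
            exact mul_le_mul_of_nonneg_left this hP
        _ = M * P := mul_comm _ _
    have hfa : a (c - t) = |f s (c - t) v x| * P := by
      show |f s (c - t) v x * ∏ i, z i ^ ((c - t) i)| = _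
      rw [abs_mul]
    calc |((t s : ℝ) * f s (c - t) v x) * ((α s' : ℝ) * f s' (t - α + Pi.single s' 1) u x)|
        = (|(t s : ℝ)| * |f s (c - t) v x|) * (|(α s' : ℝ)|
            * |f s' (t - α + Pi.single s' 1) u x|) := by
          rw [abs_mul, abs_mul, abs_mul]
      _ ≤ ((|((c - t) s : ℝ)| + |(c s : ℝ)|) * |f s (c - t) v x|)
            * (|(α s' : ℝ)| * (M * P / K)) := by
          apply mul_le_mul
          · exact mul_le_mul_of_nonneg_right h1 (abs_nonneg _)
          · exact mul_le_mul_of_nonneg_left h2 (abs_nonneg _)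
          · positivity
          · positivity
      _ = C * ((|((c - t) s : ℝ)| + |(c s : ℝ)|) * (|f s (c - t) v x| * P)) := by
          rw [hCdef]; ring
      _ = C * ((|((c - t) s : ℝ)| + |(c s : ℝ)|) * a (c - t)) := by rw [hfa]
  have := habs.of_abs
  refine this.congr fun t => ?_
  rw [hc t]
end

section
/- Let y : V → ℝ^n be a differentiable map on a neighborhood V ⊆ U of 0 with y_s(x) ≠ 0 for all s and all x ∈ V, satisfying the system ∂y_r/∂x_u + Σ_{α∈ℤ^n} f_{rαu}(x) y(x)^α = 0 for all 1 ≤ r ≤ n, 1 ≤ u ≤ k and x ∈ V, where for every 1 ≤ r ≤ n, 1 ≤ u ≤ k and x ∈ V the family (α ↦ f_{rαu}(x) y(x)^α) is absolutely summable. For α ∈ ℤ^n define y_α : V → ℝ by y_α(x) = y_1(x)^{α_1}⋯y_n(x)^{α_n}. Then for every α ∈ ℤ^n, 1 ≤ u ≤ k and x ∈ V, the family (γ ∈ ℤ^n ↦ h_{αγu}(x) y_γ(x)) is summable and ∂y_α/∂x_u + Σ_{γ∈ℤ^n} h_{αγu}(x) y_γ(x) = 0. -/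
open Finset

section Monomial

variable {ι : Type*} [Fintype ι]

theorem prod_zpow_add {G₀ : Type*} [CommGroupWithZero G₀] {y : ι → G₀} (hy : ∀ i, y i ≠ 0)
    (α β : ι → ℤ) : ∏ i, y i ^ (α + β) i = (∏ i, y i ^ α i) * ∏ i, y i ^ β i := by
  rw [← prod_mul_distrib]
  exact prod_congr rfl fun i _ => zpow_add₀ (hy i) _ _

theorem prod_zpow_sub_single {M : Type*} [DivisionCommMonoid M] [DecidableEq ι] (y : ι → M)
    (α : ι → ℤ) (i : ι) :
    ∏ j, y j ^ (α - Pi.single i 1 : ι → ℤ) j = y i ^ (α i - 1) * ∏ j ∈ univ.erase i, y j ^ α j := by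
  rw [← mul_prod_erase univ _ (mem_univ i)]
  congr 1
  · simp
  · exact prod_congr rfl fun j hj => by simp [Pi.single_eq_of_ne (ne_of_mem_erase hj)]

theorem HasSum.shift_prod_zpow {K : Type*} [Field K] [TopologicalSpace K] [IsTopologicalRing K]
    {y : ι → K} (hy : ∀ i, y i ≠ 0) {g : (ι → ℤ) → K} {S : K}
    (h : HasSum (fun β => g β * ∏ i, y i ^ β i) S) (c : ι → ℤ) :
    HasSum (fun γ => g (γ - c) * ∏ i, y i ^ γ i) ((∏ i, y i ^ c i) * S) := by
  rw [← (Equiv.addRight c).hasSum_iff]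
  refine (h.mul_left (∏ i, y i ^ c i)).congr_fun fun β => ?_
  simp only [Function.comp_apply, Equiv.coe_addRight, add_sub_cancel_right, prod_zpow_add hy]
  ring

theorem HasFDerivAt.prod_zpow {𝕜 E : Type*} [NontriviallyNormedField 𝕜] [NormedAddCommGroup E]
    [NormedSpace 𝕜 E] [DecidableEq ι] {y : E → ι → 𝕜} {y' : E →L[𝕜] ι → 𝕜} {x : E}
    (hy : HasFDerivAt y y' x) (hne : ∀ i, y x i ≠ 0) (α : ι → ℤ) :
    HasFDerivAt (fun z => ∏ i, y z i ^ α i)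
      (∑ i, ((α i : 𝕜) * ∏ j, y x j ^ (α - Pi.single i 1 : ι → ℤ) j) •
        (ContinuousLinearMap.proj i).comp y') x := by
  have hfactor : ∀ i, HasFDerivAt (fun z => y z i ^ α i)
      (((α i : 𝕜) * y x i ^ (α i - 1)) • (ContinuousLinearMap.proj i).comp y') x := fun i =>
    (hasDerivAt_zpow (α i) (y x i) (Or.inl (hne i))).comp_hasFDerivAt x
      (hasFDerivAt_pi'.1 hy i)
  refine (HasFDerivAt.finsetProd (u := univ) (fun i _ => hfactor i)).congr_fderiv ?_
  refine sum_congr rfl fun i _ => ?_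
  rw [prod_zpow_sub_single, smul_smul]
  ring_nf

end Monomial

theorem hasSum_hfun_mul_prod_zpow {n k : ℕ} (f : Fin n → (Fin n → ℤ) → Fin k → (Fin k → ℝ) → ℝ)
    (α : Fin n → ℤ) (u : Fin k) (x : Fin k → ℝ) {y : Fin n → ℝ} (hy : ∀ i, y i ≠ 0)
    {S : Fin n → ℝ} (hS : ∀ s, HasSum (fun β => f s β u x * ∏ i, y i ^ β i) (S s)) :
    HasSum (fun γ => hfun f α γ u x * ∏ i, y i ^ γ i)
      (∑ s, (α s : ℝ) * ((∏ i, y i ^ (α - Pi.single s 1 : Fin n → ℤ) i) * S s)) := by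
  simp only [hfun, sum_mul]
  refine hasSum_sum fun s _ => ?_
  refine (((hS s).shift_prod_zpow hy (α - Pi.single s 1)).mul_left (α s : ℝ)).congr_fun
    fun γ => ?_
  rw [show γ - α + Pi.single s 1 = γ - (α - Pi.single s 1) by abel]
  ring

theorem stmt_14_general (n k : ℕ)
    (f : Fin n → (Fin n → ℤ) → Fin k → (Fin k → ℝ) → ℝ)
    (V : Set (Fin k → ℝ))
    (y : (Fin k → ℝ) → Fin n → ℝ)
    (hydiff : ∀ x ∈ V, DifferentiableAt ℝ y x)
    (hyne : ∀ x ∈ V, ∀ s, y x s ≠ 0)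
    (hsummable : ∀ x ∈ V, ∀ (r : Fin n) (u : Fin k),
      Summable (fun α : Fin n → ℤ => |f r α u x * ∏ i, y x i ^ α i|))
    (hsys : ∀ x ∈ V, ∀ (r : Fin n) (u : Fin k),
      fderiv ℝ (fun z => y z r) x (Pi.single u 1)
        + ∑' α : Fin n → ℤ, f r α u x * ∏ i, y x i ^ α i = 0) :
    ∀ (α : Fin n → ℤ) (u : Fin k), ∀ x ∈ V,
      Summable (fun γ : Fin n → ℤ => hfun f α γ u x * ∏ i, y x i ^ γ i) ∧
      fderiv ℝ (fun z => ∏ i, y z i ^ α i) x (Pi.single u 1)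
        + ∑' γ : Fin n → ℤ, hfun f α γ u x * ∏ i, y x i ^ γ i = 0 := by
  intro α u x hx
  have hS : ∀ s, HasSum (fun β => f s β u x * ∏ i, y x i ^ β i)
      (-fderiv ℝ y x (Pi.single u 1) s) := fun s => by
    have hs := hsys x hx s u
    rw [fderiv_apply (hydiff x hx), ContinuousLinearMap.comp_apply,
      ContinuousLinearMap.proj_apply] at hs
    rw [eq_neg_of_add_eq_zero_left hs, neg_neg]
    exact (hsummable x hx s u).of_abs.hasSum
  have hsum := hasSum_hfun_mul_prod_zpow f α u x (hyne x hx) hS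
  refine ⟨hsum.summable, ?_⟩
  rw [hsum.tsum_eq, ((hydiff x hx).hasFDerivAt.prod_zpow (hyne x hx) α).fderiv]
  simp [mul_neg, mul_assoc]

/-- If `y` is a differentiable, nowhere-vanishing componentwise, solution on `V ⊆ U` of the
nonlinear system `∂y_r/∂x_u + ∑_{α∈ℤⁿ} f_{rαu}(x) y(x)^α = 0` (the families being absolutely
summable), then the functions `y_α = y₁^{α₁}⋯y_n^{α_n}` satisfy the induced linear system
`∂y_α/∂x_u + ∑_{γ∈ℤⁿ} h_{αγu} y_γ = 0`, the families `γ ↦ h_{αγu}(x) y_γ(x)` being summable. -/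
theorem stmt_14 (n k : ℕ) (hn : 1 ≤ n) (hk : 1 ≤ k)
    (U : Set (Fin k → ℝ)) (hUopen : IsOpen U) (hU0 : (0 : Fin k → ℝ) ∈ U)
    (f : Fin n → (Fin n → ℤ) → Fin k → (Fin k → ℝ) → ℝ)
    (hf : ∀ r α u, AnalyticOnNhd ℝ (f r α u) U)
    (V : Set (Fin k → ℝ)) (hVopen : IsOpen V) (hV0 : (0 : Fin k → ℝ) ∈ V) (hVU : V ⊆ U)
    (y : (Fin k → ℝ) → Fin n → ℝ)
    (hydiff : ∀ x ∈ V, DifferentiableAt ℝ y x)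
    (hyne : ∀ x ∈ V, ∀ s, y x s ≠ 0)
    (hsummable : ∀ x ∈ V, ∀ (r : Fin n) (u : Fin k),
      Summable (fun α : Fin n → ℤ => |f r α u x * ∏ i, y x i ^ α i|))
    (hsys : ∀ x ∈ V, ∀ (r : Fin n) (u : Fin k),
      fderiv ℝ (fun z => y z r) x (Pi.single u 1)
        + ∑' α : Fin n → ℤ, f r α u x * ∏ i, y x i ^ α i = 0) :
    ∀ (α : Fin n → ℤ) (u : Fin k), ∀ x ∈ V,
      Summable (fun γ : Fin n → ℤ => hfun f α γ u x * ∏ i, y x i ^ γ i) ∧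
      fderiv ℝ (fun z => ∏ i, y z i ^ α i) x (Pi.single u 1)
        + ∑' γ : Fin n → ℤ, hfun f α γ u x * ∏ i, y x i ^ γ i = 0 :=
  stmt_14_general n k f V y hydiff hyne hsummable hsys
end

section
/- Let W ⊆ (ℝ∖{0})^n be a nonempty open set such that for every x ∈ U, 1 ≤ r ≤ n, 1 ≤ u ≤ k and z ∈ W the family (α ↦ f_{rαu}(x) z^α) is absolutely summable, with the sum depending analytically on (x, z). Let y, ỹ : V → ℝ^n be analytic maps on a connected neighborhood V ⊆ U of 0, both taking values in W, both satisfying ∂y_r/∂x_u + Σ_{α∈ℤ^n} f_{rαu}(x) y(x)^α = 0 for all 1 ≤ r ≤ n, 1 ≤ u ≤ k and x ∈ V, and with y(0) = ỹ(0). Then y = ỹ on a neighborhood of 0. -/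
/-!
Both solutions solve the total differential equation `dY = A(x, Y)`, where `A(x, z)` is the linear
map `e_u ↦ -(∑_α f_{rαu}(x) z^α)_r`; `A` is analytic, hence locally Lipschitz, near `(0, y(0))`.
Restricted to the segment from `0` to a nearby point `x`, each solution solves the ordinary
differential equation `γ' = A(s x, γ)(x)`, so the two restrictions agree by Cauchy–Lipschitz
uniqueness, in particular at `s = 1`.
-/

open Filter Topology Set
open scoped NNReal

section TotalDifferentialEquation

variable {E F : Type*} [NormedAddCommGroup E] [NormedSpace ℝ E]
  [NormedAddCommGroup F] [NormedSpace ℝ F]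

lemma LipschitzOnWith.apply_prodMk {A : E × F → E →L[ℝ] F} {K : ℝ≥0} {T : Set (E × F)}
    (hA : LipschitzOnWith K A T) (x h : E) :
    LipschitzOnWith (K * ‖h‖₊) (fun z => A (x, z) h) {z | (x, z) ∈ T} := by
  refine LipschitzOnWith.of_dist_le_mul fun z hz z' hz' => ?_
  have hdist : dist (x, z) (x, z') = dist z z' := by simp [Prod.dist_eq]
  calc dist (A (x, z) h) (A (x, z') h) = ‖(A (x, z) - A (x, z')) h‖ := by
        rw [dist_eq_norm, sub_apply]
    _ ≤ ‖A (x, z) - A (x, z')‖ * ‖h‖ := (A (x, z) - A (x, z')).le_opNorm h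
    _ ≤ K * dist z z' * ‖h‖ := by
        gcongr
        rw [← dist_eq_norm, ← hdist]
        exact hA.dist_le_mul _ hz _ hz'
    _ = ↑(K * ‖h‖₊) * dist z z' := by push_cast; ring

lemma HasFDerivAt.hasDerivAt_comp_lineMap {Y : E → F} {L : E →L[ℝ] F} {a b : E} {s : ℝ}
    (hY : HasFDerivAt Y L (AffineMap.lineMap a b s)) :
    HasDerivAt (fun t : ℝ => Y (AffineMap.lineMap a b t)) (L (b - a)) s :=
  hY.comp_hasDerivAt s AffineMap.hasDerivAt_lineMap

theorem totalDiffEq_solution_unique_of_eventually {A : E × F → E →L[ℝ] F} {Y₁ Y₂ : E → F}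
    {x₀ : E} (hA : ContDiffAt ℝ 1 A (x₀, Y₁ x₀))
    (hY₁ : ∀ᶠ x in 𝓝 x₀, HasFDerivAt Y₁ (A (x, Y₁ x)) x)
    (hY₂ : ∀ᶠ x in 𝓝 x₀, HasFDerivAt Y₂ (A (x, Y₂ x)) x)
    (h₀ : Y₁ x₀ = Y₂ x₀) : Y₁ =ᶠ[𝓝 x₀] Y₂ := by
  obtain ⟨K, T, hT, hAT⟩ := hA.exists_lipschitzOnWith
  have graph_mem : ∀ Y : E → F, Y x₀ = Y₁ x₀ → ContinuousAt Y x₀ →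
      ∀ᶠ x in 𝓝 x₀, (x, Y x) ∈ T := fun Y hY hc =>
    (continuousAt_id.prodMk hc).preimage_mem_nhds (by simpa [hY] using hT)
  obtain ⟨ε, hε, hball⟩ := Metric.eventually_nhds_iff_ball.1
    ((hY₁.and (graph_mem Y₁ rfl hY₁.self_of_nhds.continuousAt)).and
      (hY₂.and (graph_mem Y₂ h₀.symm hY₂.self_of_nhds.continuousAt)))
  filter_upwards [Metric.ball_mem_nhds x₀ (half_pos hε)] with x hx
  set γ : ℝ →ᵃ[ℝ] E := AffineMap.lineMap x₀ x
  have hγ : ∀ s ∈ Ioo (-2 : ℝ) 2, γ s ∈ Metric.ball x₀ ε := fun s hs => by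
    rw [Metric.mem_ball, dist_lineMap_left, Real.norm_eq_abs, dist_comm]
    calc |s| * dist x x₀ ≤ 2 * dist x x₀ := by gcongr; exact (abs_lt.2 hs).le
      _ < ε := by linarith [Metric.mem_ball.1 hx]
  have restrict : ∀ Y : E → F,
      (∀ x' ∈ Metric.ball x₀ ε, HasFDerivAt Y (A (x', Y x')) x' ∧ (x', Y x') ∈ T) →
      ∀ s ∈ Ioo (-2 : ℝ) 2, HasDerivAt (fun t => Y (γ t)) (A (γ s, Y (γ s)) (x - x₀)) s ∧
        Y (γ s) ∈ {z | (γ s, z) ∈ T} := fun Y hY s hs =>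
    ⟨(hY _ (hγ s hs)).1.hasDerivAt_comp_lineMap, (hY _ (hγ s hs)).2⟩
  have hEq := ODE_solution_unique_of_mem_Ioo (fun s _ => hAT.apply_prodMk (γ s) (x - x₀))
    (by norm_num : (0 : ℝ) ∈ Ioo (-2) 2)
    (restrict Y₁ fun x' hx' => (hball x' hx').1) (restrict Y₂ fun x' hx' => (hball x' hx').2)
    (by simpa [γ] using h₀)
  simpa [γ] using hEq (by norm_num : (1 : ℝ) ∈ Ioo (-2) 2)

end TotalDifferentialEquation

lemma hasFDerivAt_piRing_symm {ι κ : Type*} [Fintype ι] [Fintype κ] [DecidableEq κ]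
    {Y : (κ → ℝ) → ι → ℝ} {x : κ → ℝ} (hY : DifferentiableAt ℝ Y x) {G : κ → ι → ℝ}
    (hG : ∀ u r, fderiv ℝ (fun z => Y z r) x (Pi.single u 1) = G u r) :
    HasFDerivAt Y ((ContinuousLinearEquiv.piRing (𝕜 := ℝ) κ).symm G) x := by
  suffices (ContinuousLinearEquiv.piRing (𝕜 := ℝ) κ).symm G = fderiv ℝ Y x from
    this ▸ hY.hasFDerivAt
  rw [eq_comm, ContinuousLinearEquiv.eq_symm_apply]
  funext u r
  rw [← hG, fderiv_apply hY]
  rfl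

theorem stmt_17_general (n k : ℕ)
    (U : Set (Fin k → ℝ)) (hU0 : (0 : Fin k → ℝ) ∈ U)
    (f : Fin n → (Fin n → ℤ) → Fin k → (Fin k → ℝ) → ℝ)
    (W : Set (Fin n → ℝ))
    (hFanalytic : ∀ (r : Fin n) (u : Fin k),
      AnalyticOnNhd ℝ
        (fun p : (Fin k → ℝ) × (Fin n → ℝ) =>
          ∑' α : Fin n → ℤ, f r α u p.1 * ∏ i, p.2 i ^ α i)
        (U ×ˢ W))
    (V : Set (Fin k → ℝ)) (hVopen : IsOpen V)
    (hV0 : (0 : Fin k → ℝ) ∈ V)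
    (y ytilde : (Fin k → ℝ) → Fin n → ℝ)
    (hy : AnalyticOnNhd ℝ y V) (hyt : AnalyticOnNhd ℝ ytilde V)
    (hyW : ∀ x ∈ V, y x ∈ W)
    (hysys : ∀ x ∈ V, ∀ (r : Fin n) (u : Fin k),
      fderiv ℝ (fun z => y z r) x (Pi.single u 1)
        + ∑' α : Fin n → ℤ, f r α u x * ∏ i, y x i ^ α i = 0)
    (hytsys : ∀ x ∈ V, ∀ (r : Fin n) (u : Fin k),
      fderiv ℝ (fun z => ytilde z r) x (Pi.single u 1)
        + ∑' α : Fin n → ℤ, f r α u x * ∏ i, ytilde x i ^ α i = 0)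
    (h0 : y 0 = ytilde 0) :
    ∃ V' : Set (Fin k → ℝ), IsOpen V' ∧ (0 : Fin k → ℝ) ∈ V' ∧ Set.EqOn y ytilde V' := by
  set Φ : Fin k → (Fin k → ℝ) × (Fin n → ℝ) → Fin n → ℝ :=
    fun u p r => ∑' α : Fin n → ℤ, f r α u p.1 * ∏ i, p.2 i ^ α i
  set A : (Fin k → ℝ) × (Fin n → ℝ) → (Fin k → ℝ) →L[ℝ] Fin n → ℝ :=
    fun p => (ContinuousLinearEquiv.piRing (𝕜 := ℝ) (Fin k)).symm fun u => -Φ u p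
  have hA : ContDiffAt ℝ 1 A (0, y 0) :=
    (ContinuousLinearEquiv.piRing (Fin k)).symm.contDiff.contDiffAt.comp _ <| contDiffAt_pi.2
      fun u => (AnalyticAt.pi fun r => hFanalytic r u _ ⟨hU0, hyW 0 hV0⟩).contDiffAt.neg
  have solves : ∀ Y : (Fin k → ℝ) → Fin n → ℝ, AnalyticOnNhd ℝ Y V →
      (∀ x ∈ V, ∀ r u, fderiv ℝ (fun z => Y z r) x (Pi.single u 1) + Φ u (x, Y x) r = 0) →
      ∀ᶠ x in 𝓝 0, HasFDerivAt Y (A (x, Y x)) x := fun Y hY hsys =>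
    eventually_of_mem (hVopen.mem_nhds hV0) fun x hx =>
      hasFDerivAt_piRing_symm (hY x hx).differentiableAt fun u r =>
        eq_neg_of_add_eq_zero_left (hsys x hx r u)
  obtain ⟨V', hEqOn, hV'open, hV'0⟩ := eventually_nhds_iff.1 <|
    totalDiffEq_solution_unique_of_eventually hA (solves y hy hysys) (solves ytilde hyt hytsys) h0
  exact ⟨V', hV'open, hV'0, hEqOn⟩

/-- Uniqueness for the nonlinear system: if `W ⊆ (ℝ∖{0})ⁿ` is a nonempty open set on which all
the Laurent families `α ↦ f_{rαu}(x) z^α` are absolutely summable, with sums depending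
analytically on `(x, z)`, and `y, ỹ` are analytic `W`-valued solutions of
`∂y_r/∂x_u + ∑_{α∈ℤⁿ} f_{rαu}(x) y(x)^α = 0` on a connected neighborhood `V ⊆ U` of `0` with
`y(0) = ỹ(0)`, then `y = ỹ` on a neighborhood of `0`. -/
theorem stmt_17 (n k : ℕ) (hn : 1 ≤ n) (hk : 1 ≤ k)
    (U : Set (Fin k → ℝ)) (hUopen : IsOpen U) (hU0 : (0 : Fin k → ℝ) ∈ U)
    (f : Fin n → (Fin n → ℤ) → Fin k → (Fin k → ℝ) → ℝ)
    (hf : ∀ r α u, AnalyticOnNhd ℝ (f r α u) U)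
    (W : Set (Fin n → ℝ)) (hWne : W.Nonempty) (hWopen : IsOpen W)
    (hW0 : ∀ z ∈ W, ∀ i, z i ≠ 0)
    (hWsum : ∀ x ∈ U, ∀ (r : Fin n) (u : Fin k), ∀ z ∈ W,
      Summable (fun α : Fin n → ℤ => |f r α u x * ∏ i, z i ^ α i|))
    (hFanalytic : ∀ (r : Fin n) (u : Fin k),
      AnalyticOnNhd ℝ
        (fun p : (Fin k → ℝ) × (Fin n → ℝ) =>
          ∑' α : Fin n → ℤ, f r α u p.1 * ∏ i, p.2 i ^ α i)
        (U ×ˢ W))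
    (V : Set (Fin k → ℝ)) (hVopen : IsOpen V) (hVconn : IsConnected V)
    (hV0 : (0 : Fin k → ℝ) ∈ V) (hVU : V ⊆ U)
    (y ytilde : (Fin k → ℝ) → Fin n → ℝ)
    (hy : AnalyticOnNhd ℝ y V) (hyt : AnalyticOnNhd ℝ ytilde V)
    (hyW : ∀ x ∈ V, y x ∈ W) (hytW : ∀ x ∈ V, ytilde x ∈ W)
    (hysys : ∀ x ∈ V, ∀ (r : Fin n) (u : Fin k),
      fderiv ℝ (fun z => y z r) x (Pi.single u 1)
        + ∑' α : Fin n → ℤ, f r α u x * ∏ i, y x i ^ α i = 0)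
    (hytsys : ∀ x ∈ V, ∀ (r : Fin n) (u : Fin k),
      fderiv ℝ (fun z => ytilde z r) x (Pi.single u 1)
        + ∑' α : Fin n → ℤ, f r α u x * ∏ i, ytilde x i ^ α i = 0)
    (h0 : y 0 = ytilde 0) :
    ∃ V' : Set (Fin k → ℝ), IsOpen V' ∧ (0 : Fin k → ℝ) ∈ V' ∧ Set.EqOn y ytilde V' :=
  stmt_17_general n k U hU0 f W hFanalytic V hVopen hV0 y ytilde hy hyt hyW hysys hytsys h0
end
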